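/- arXiv:2107.12263 — 2 statements merged into one kernel-verified Lean document; each statement's English description precedes it below -/
import Mathlib

section
/- The cocycle κ classifying 𝒵_n as an extension of S_n by ℤ₂^(n choose 2) equals η ∘ φ, where φ is the cocycle classifying G_n as an extension of S_n by ℤ^(n choose 2) and η: ℤ^(n choose 2) → ℤ₂^(n choose 2) is the coordinatewise mod 2 reduction. Explicitly, κ(c̃_{i,j}) = ḡ_{i,j}; κ(d̃_{i,j,k,ℓ}) = ḡ_{i,k} + ḡ_{k,j} + ḡ_{i,ℓ} + ḡ_{ℓ,j} if i<k<j<ℓ or k<i<ℓ<j, else 0; κ(ẽ_{i,k,j}) = ḡ_{i,j} + ḡ_{j,k} if i<k<j, j<i<k, or k<j<i, else 0. Consequently the class [κ] ∈ H²(S_n; ℤ₂^(n choose 2)) is the mod 2 reduction of the class [φ] ∈ H²(S_n; ℤ^(n choose 2)). -/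
/-!
In `G_n` the kernel of `G_n → S_n` is abelian, so a braid `x` acts on the full twists
`A_{p,q} = b_{p,q}²` only through its permutation: `x A_{p,q} x⁻¹ = A_{π x p, π x q}`; on the
Artin generators this follows from the half-twist relations, and the generators generate `B_n`.
Those relations read `b_{p,q} b_{q,r} b_{p,q}⁻¹ = b_{p,r}` when `p, q, r` are in cyclic order
and `= A_{p,q} b_{p,r} A_{p,q}⁻¹` otherwise; together with the action they turn every value
of `φ` into an explicit product of full twists. Since `κ` is the cocycle of the section
`f ∘ s`, it is `f ∘ φ`, and in `𝒵_n` the full twists become the commuting involutions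
`ḡ_{p,q}`.
-/

/-- Artin relations for the braid group on `n` strands (generators indexed by `Fin (n-1)`). -/
def braidRels (n : ℕ) : Set (FreeGroup (Fin (n - 1))) :=
  {r | ∃ i j : Fin (n - 1),
    ((i : ℕ) + 1 = (j : ℕ) ∧
      r = FreeGroup.of i * FreeGroup.of j * FreeGroup.of i *
        (FreeGroup.of j * FreeGroup.of i * FreeGroup.of j)⁻¹) ∨
    ((i : ℕ) + 1 < (j : ℕ) ∧
      r = FreeGroup.of i * FreeGroup.of j * (FreeGroup.of j * FreeGroup.of i)⁻¹)}

/-- The braid group `B_n`. -/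
abbrev BraidGroup (n : ℕ) := PresentedGroup (braidRels n)

/-- The Artin generator `b_t` (`0`-based; trivial outside range). -/
noncomputable def bgen (n t : ℕ) : BraidGroup n :=
  if h : t < n - 1 then PresentedGroup.of (⟨t, h⟩ : Fin (n - 1)) else 1

/-- The product `b_i ⋯ b_{j-1}`. -/
noncomputable def bpref (n i j : ℕ) : BraidGroup n :=
  ((List.range' i (j - i)).map (bgen n)).prod

/-- The half twist `b_{i,j}` (for strands `i < j`, `0`-based). -/
noncomputable def halfTwist (n i j : ℕ) : BraidGroup n :=
  bpref n i (j - 1) * bgen n (j - 1) * (bpref n i (j - 1))⁻¹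

/-- The half twist for unordered indices. -/
noncomputable def bb (n i j : ℕ) : BraidGroup n := halfTwist n (min i j) (max i j)

/-- The standard generator condition for the projection `B_n → S_n`. -/
def IsBraidProj (n : ℕ) (π : BraidGroup n →* Equiv.Perm (Fin n)) : Prop :=
  ∀ i : Fin (n - 1), π (PresentedGroup.of i) =
    Equiv.swap ⟨(i : ℕ), by have := i.2; omega⟩ ⟨(i : ℕ) + 1, by have := i.2; omega⟩

/-- `G_n = B_n/[PB_n, PB_n]`. -/
abbrev Gq (n : ℕ) (π : BraidGroup n →* Equiv.Perm (Fin n)) :=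
  BraidGroup n ⧸ (⁅π.ker, π.ker⁆ : Subgroup (BraidGroup n))

/-- Image of the half twist `b_{i,j}` in `G_n`. -/
noncomputable def ht (n : ℕ) (π : BraidGroup n →* Equiv.Perm (Fin n)) (i j : ℕ) : Gq n π :=
  QuotientGroup.mk (bb n i j)

/-- Image of the full twist `b_{i,j}²` in `G_n`. -/
noncomputable def ft (n : ℕ) (π : BraidGroup n →* Equiv.Perm (Fin n)) (i j : ℕ) : Gq n π :=
  QuotientGroup.mk ((bb n i j) ^ 2)

/-- The subgroup `A_n ≤ G_n` normally generated by the squares of the full twists. -/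
abbrev An (n : ℕ) (π : BraidGroup n →* Equiv.Perm (Fin n)) : Subgroup (Gq n π) :=
  Subgroup.normalClosure {x : Gq n π | ∃ i j : ℕ, i < j ∧ j < n ∧ x = (ft n π i j) ^ 2}

/-- The mod 4 braid group `𝒵_n`, realized as `G_n/A_n`. -/
abbrev Zq (n : ℕ) (π : BraidGroup n →* Equiv.Perm (Fin n)) := Gq n π ⧸ An n π

/-- The generator `ḡ_{i,j}` of the kernel `ℤ₂^(n choose 2)` of `𝒵_n → S_n`. -/
noncomputable def fgZ (n : ℕ) (π : BraidGroup n →* Equiv.Perm (Fin n)) (i j : ℕ) : Zq n π :=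
  QuotientGroup.mk (ft n π i j)

theorem sbtw_or_sbtw_of_ne {α : Type*} [CircularOrder α] {a b c : α} (hab : a ≠ b)
    (hbc : b ≠ c) (hac : a ≠ c) : sbtw a b c ∨ sbtw a c b := by
  by_contra h
  rw [not_or, sbtw_iff_not_btw, sbtw_iff_not_btw, not_not, not_not] at h
  rcases (btw_cyclic_right h.1).antisymm h.2 with h | h | h
  exacts [hac h, hbc h.symm, hab h.symm]

theorem swap_mul_swap_eq_swap_mul_swap {α : Type*} [DecidableEq α] {a b c : α} (hca : c ≠ a)
    (hcb : c ≠ b) : Equiv.swap a b * Equiv.swap b c = Equiv.swap a c * Equiv.swap a b := by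
  rw [← mul_inv_eq_iff_eq_mul, ← Equiv.swap_apply_apply, Equiv.swap_apply_right,
    Equiv.swap_apply_of_ne_of_ne hca hcb]

section Artin

variable {n : ℕ}

theorem bgen_mul_bgen_mul_bgen {t : ℕ} (h : t + 1 < n - 1) :
    bgen n t * bgen n (t + 1) * bgen n t = bgen n (t + 1) * bgen n t * bgen n (t + 1) := by
  rw [bgen, bgen, dif_pos (by omega : t < n - 1), dif_pos h]
  exact PresentedGroup.mk_eq_mk_of_mul_inv_mem
    ⟨⟨t, by omega⟩, ⟨t + 1, h⟩, Or.inl ⟨rfl, rfl⟩⟩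

theorem commute_bgen_bgen {t u : ℕ} (h : t + 1 < u) : Commute (bgen n t) (bgen n u) := by
  by_cases hu : u < n - 1
  · rw [Commute, SemiconjBy, bgen, bgen, dif_pos (by omega : t < n - 1), dif_pos hu]
    exact PresentedGroup.mk_eq_mk_of_mul_inv_mem
      ⟨⟨t, by omega⟩, ⟨u, hu⟩, Or.inr ⟨h, rfl⟩⟩
  · simp [bgen, hu]

theorem bpref_of_le {i j : ℕ} (h : j ≤ i) : bpref n i j = 1 := by
  simp [bpref, Nat.sub_eq_zero_of_le h]

theorem bpref_succ {i j : ℕ} (h : i ≤ j) : bpref n i (j + 1) = bpref n i j * bgen n j := by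
  rw [bpref, bpref, show j + 1 - i = j - i + 1 by omega, List.range'_1_concat, List.map_append,
    List.prod_append, show i + (j - i) = j by omega]
  simp

theorem bpref_mul_bpref {i j k : ℕ} (hij : i ≤ j) (hjk : j ≤ k) :
    bpref n i j * bpref n j k = bpref n i k := by
  obtain ⟨a, rfl⟩ := Nat.exists_eq_add_of_le hij
  obtain ⟨b, rfl⟩ := Nat.exists_eq_add_of_le hjk
  simp only [bpref, add_assoc, Nat.add_sub_cancel_left, Nat.add_sub_add_left, ← List.prod_append,
    ← List.map_append, List.range'_append_1]

theorem bpref_self_succ (i : ℕ) : bpref n i (i + 1) = bgen n i := by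
  rw [bpref_succ le_rfl, bpref_of_le le_rfl, one_mul]

theorem commute_bpref_of_forall {x : BraidGroup n} {i j : ℕ}
    (h : ∀ m, i ≤ m → m < j → Commute x (bgen n m)) : Commute x (bpref n i j) := by
  refine Commute.list_prod_right _ _ fun y hy => ?_
  obtain ⟨m, hm, rfl⟩ := List.mem_map.1 hy
  rw [List.mem_range'_1] at hm
  exact h m hm.1 (by omega)

theorem commute_bpref_bpref {i j k l : ℕ} (h : j < k) : Commute (bpref n i j) (bpref n k l) :=
  commute_bpref_of_forall fun m' hkm' _ =>
    (commute_bpref_of_forall fun m _ hmj => (commute_bgen_bgen (by omega : m + 1 < m')).symm).symm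

theorem bpref_conj_bgen {i j t : ℕ} (hi : i ≤ t) (hj : t + 2 ≤ j) (hn : j < n) :
    bpref n i j * bgen n t * (bpref n i j)⁻¹ = bgen n (t + 1) := by
  have hA : Commute (bpref n i t) (bgen n (t + 1)) :=
    (commute_bpref_of_forall fun m _ hmt => (commute_bgen_bgen (by omega)).symm).symm
  have hB : Commute (bpref n (t + 2) j) (bgen n t) :=
    (commute_bpref_of_forall fun m hm _ => commute_bgen_bgen (by omega)).symm
  rw [← bpref_mul_bpref (by omega : i ≤ t + 2) hj,
    ← bpref_mul_bpref hi (by omega : t ≤ t + 2), bpref_succ (by omega : t ≤ t + 1),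
    bpref_self_succ]
  calc bpref n i t * (bgen n t * bgen n (t + 1)) * bpref n (t + 2) j * bgen n t *
        (bpref n i t * (bgen n t * bgen n (t + 1)) * bpref n (t + 2) j)⁻¹
      = bpref n i t * (bgen n t * bgen n (t + 1) *
          (bpref n (t + 2) j * bgen n t * (bpref n (t + 2) j)⁻¹) *
          (bgen n (t + 1))⁻¹ * (bgen n t)⁻¹) * (bpref n i t)⁻¹ := by group
    _ = bpref n i t * bgen n (t + 1) * (bpref n i t)⁻¹ := by
      rw [hB.mul_inv_cancel, bgen_mul_bgen_mul_bgen (by omega)]; group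
    _ = bgen n (t + 1) := hA.mul_inv_cancel

theorem bpref_conj_bpref {i j k l : ℕ} (hik : i ≤ k) (hlj : l + 1 ≤ j) (hn : j < n) :
    bpref n i j * bpref n k l * (bpref n i j)⁻¹ = bpref n (k + 1) (l + 1) := by
  induction l with
  | zero => rw [bpref_of_le (Nat.zero_le k), bpref_of_le (by omega : 1 ≤ k + 1)]; group
  | succ l ih =>
    by_cases hkl : k ≤ l
    · rw [bpref_succ hkl, bpref_succ (by omega : k + 1 ≤ l + 1), ← ih (by omega),
        ← bpref_conj_bgen (i := i) (by omega) hlj hn]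
      group
    · rw [bpref_of_le (by omega : l + 1 ≤ k), bpref_of_le (by omega : l + 1 + 1 ≤ k + 1)]
      group

theorem halfTwist_eq {i j : ℕ} (h : i < j) :
    halfTwist n i j = bpref n i j * (bpref n i (j - 1))⁻¹ := by
  obtain ⟨j, rfl⟩ := Nat.exists_eq_add_of_lt h
  rw [halfTwist, show i + j + 1 - 1 = i + j by omega, bpref_succ (by omega)]

theorem halfTwist_succ (t : ℕ) : halfTwist n t (t + 1) = bgen n t := by
  simp [halfTwist, bpref_of_le]

theorem bpref_conj_halfTwist {i j k l : ℕ} (hik : i ≤ k) (hkl : k < l) (hlj : l < j)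
    (hn : j < n) :
    bpref n i j * halfTwist n k l * (bpref n i j)⁻¹ = halfTwist n (k + 1) (l + 1) := by
  have e1 := bpref_conj_bpref (k := k) (l := l) hik hlj hn
  have e2 := bpref_conj_bpref (k := k) (l := l - 1) hik (by omega) hn
  rw [Nat.sub_add_cancel (by omega : 1 ≤ l)] at e2
  rw [halfTwist_eq hkl, halfTwist_eq (by omega : k + 1 < l + 1), Nat.add_sub_cancel, ← e1, ← e2]
  group

theorem bpref_conj_halfTwist_self {x y : ℕ} (hxy : x < y) (hy : y < n) :
    bpref n x y * halfTwist n x y * (bpref n x y)⁻¹ = bgen n x := by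
  have e := bpref_conj_bpref (k := x) (l := y - 1) le_rfl (by omega) hy
  rw [Nat.sub_add_cancel (by omega : 1 ≤ y)] at e
  calc bpref n x y * halfTwist n x y * (bpref n x y)⁻¹
      = bpref n x y * (bpref n x y * bpref n x (y - 1) * (bpref n x y)⁻¹)⁻¹ := by
        rw [halfTwist_eq hxy]; group
    _ = bgen n x := by
        rw [e, ← bpref_mul_bpref (by omega : x ≤ x + 1) hxy, bpref_self_succ]; group

theorem halfTwist_eq_bpref_conj {a b c : ℕ} (hab : a ≤ b) (hbc : b < c) :
    halfTwist n a c = bpref n a b * halfTwist n b c * (bpref n a b)⁻¹ := by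
  rw [halfTwist, halfTwist, ← bpref_mul_bpref hab (by omega : b ≤ c - 1)]
  group

theorem commute_bpref_halfTwist {i j k l : ℕ} (hjk : j < k) (hkl : k < l) :
    Commute (bpref n i j) (halfTwist n k l) := by
  rw [halfTwist_eq hkl]
  exact (commute_bpref_bpref hjk).mul_right (commute_bpref_bpref hjk).inv_right

theorem halfTwist_low_conj_high {a b c : ℕ} (hab : a < b) (hbc : b < c) :
    halfTwist n a b * halfTwist n b c * (halfTwist n a b)⁻¹ = halfTwist n a c := by
  obtain ⟨b, rfl⟩ := Nat.exists_eq_add_of_lt hab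
  have hQ : Commute (bpref n a (a + b)) (halfTwist n (a + b + 1) c) :=
    commute_bpref_halfTwist (by omega) hbc
  have e : halfTwist n a (a + b + 1) =
      bpref n a (a + b) * bgen n (a + b) * (bpref n a (a + b))⁻¹ := by
    rw [halfTwist, Nat.add_sub_cancel]
  calc halfTwist n a (a + b + 1) * halfTwist n (a + b + 1) c * (halfTwist n a (a + b + 1))⁻¹
      = bpref n a (a + b) * bgen n (a + b) *
          ((bpref n a (a + b))⁻¹ * halfTwist n (a + b + 1) c * bpref n a (a + b)) *
          (bgen n (a + b))⁻¹ * (bpref n a (a + b))⁻¹ := by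
        rw [e]; group
    _ = halfTwist n a c := by
        rw [hQ.inv_mul_cancel, halfTwist_eq_bpref_conj (by omega : a ≤ a + b + 1) hbc,
          bpref_succ (by omega : a ≤ a + b)]
        group

theorem halfTwist_outer_conj_low {a b c : ℕ} (hab : a < b) (hbc : b < c) (hc : c < n) :
    halfTwist n a c * halfTwist n a b * (halfTwist n a c)⁻¹ = halfTwist n b c := by
  -- `b_{b,c}` is `b_{b-1,c-1}` shifted by `b_a ⋯ b_{c-1}`, while `b_{b-1} ⋯ b_{c-2}` conjugates
  -- `b_{b-1,c-1}` to the generator `b_{b-1}`, from which `b_{a,b}` is built.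
  have e1 := bpref_conj_halfTwist_self (n := n) (x := b - 1) (y := c - 1) (by omega) (by omega)
  have e2 := bpref_conj_halfTwist (n := n) (i := a) (k := b - 1) (l := c - 1) (j := c)
    (by omega) (by omega) (by omega) hc
  rw [Nat.sub_add_cancel (by omega : 1 ≤ b), Nat.sub_add_cancel (by omega : 1 ≤ c)] at e2
  have e3 := bpref_mul_bpref (n := n) (by omega : a ≤ b - 1) (by omega : b - 1 ≤ c - 1)
  have e4 : halfTwist n a b = bpref n a (b - 1) * bgen n (b - 1) * (bpref n a (b - 1))⁻¹ := rfl
  rw [halfTwist_eq (hab.trans hbc), e4, ← e1, ← e2, ← e3]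
  group

theorem halfTwist_high_conj_outer {a b c : ℕ} (hab : a < b) (hbc : b < c) (hc : c < n) :
    halfTwist n b c * halfTwist n a c * (halfTwist n b c)⁻¹ = halfTwist n a b := by
  calc halfTwist n b c * halfTwist n a c * (halfTwist n b c)⁻¹
      = halfTwist n a c * halfTwist n a b * (halfTwist n b c)⁻¹ := by
        rw [← halfTwist_outer_conj_low hab hbc hc]; group
    _ = halfTwist n a b := by rw [← halfTwist_low_conj_high hab hbc]; group

theorem commute_halfTwist_of_lt {i j k l : ℕ} (hij : i < j) (hjk : j < k) (hkl : k < l) :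
    Commute (halfTwist n i j) (halfTwist n k l) := by
  rw [halfTwist_eq hij]
  exact (commute_bpref_halfTwist hjk hkl).mul_left
    (commute_bpref_halfTwist (by omega) hkl).inv_left

theorem commute_halfTwist_of_nested {i j k l : ℕ} (hik : i < k) (hkl : k < l) (hlj : l < j)
    (hj : j < n) : Commute (halfTwist n i j) (halfTwist n k l) := by
  obtain ⟨k, rfl⟩ := Nat.exists_eq_add_of_lt hik
  obtain ⟨l, rfl⟩ := Nat.exists_eq_add_of_lt hkl
  have e1 := bpref_conj_halfTwist (n := n) (i := i) (j := j) (k := i + k) (l := i + k + 1 + l)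
    (by omega) (by omega) (by omega) hj
  have e2 := bpref_conj_halfTwist (n := n) (i := i) (j := j - 1) (k := i + k) (l := i + k + 1 + l)
    (by omega) (by omega) (by omega) (by omega)
  rw [Commute, SemiconjBy, ← mul_inv_eq_iff_eq_mul, halfTwist_eq (by omega : i < j)]
  calc bpref n i j * (bpref n i (j - 1))⁻¹ * halfTwist n (i + k + 1) (i + k + 1 + l + 1) *
        (bpref n i j * (bpref n i (j - 1))⁻¹)⁻¹
      = bpref n i j * (bpref n i (j - 1))⁻¹ *
          (bpref n i (j - 1) * halfTwist n (i + k) (i + k + 1 + l) * (bpref n i (j - 1))⁻¹) *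
          (bpref n i j * (bpref n i (j - 1))⁻¹)⁻¹ := by rw [e2]
    _ = halfTwist n (i + k + 1) (i + k + 1 + l + 1) := by rw [← e1]; group

end Artin

section Projection

variable {n : ℕ} {π : BraidGroup n →* Equiv.Perm (Fin n)}

theorem IsBraidProj.map_bgen (hgen : IsBraidProj n π) {t : ℕ} (ht : t < n - 1) :
    π (bgen n t) = Equiv.swap ⟨t, by omega⟩ ⟨t + 1, by omega⟩ := by
  rw [bgen, dif_pos ht]
  exact hgen ⟨t, ht⟩

theorem IsBraidProj.map_halfTwist (hgen : IsBraidProj n π) {a c : ℕ} (hac : a < c)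
    (hc : c < n) : π (halfTwist n a c) = Equiv.swap ⟨a, by omega⟩ ⟨c, hc⟩ := by
  obtain ⟨d, hd⟩ := Nat.exists_eq_add_of_lt hac
  induction d generalizing a with
  | zero =>
    subst hd
    rw [halfTwist_succ, hgen.map_bgen (by omega)]
  | succ d ih =>
    rw [halfTwist_eq_bpref_conj (by omega : a ≤ a + 1) (by omega), bpref_self_succ, map_mul,
      map_mul, map_inv, hgen.map_bgen (by omega), ih (by omega) (by omega),
      ← Equiv.swap_apply_apply, Equiv.swap_apply_right,
      Equiv.swap_apply_of_ne_of_ne (by simp [Fin.ext_iff]; omega) (by simp [Fin.ext_iff]; omega)]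

end Projection

section HalfTwists

variable {n : ℕ}

theorem bb_comm (n i j : ℕ) : bb n i j = bb n j i := by
  rw [bb, bb, min_comm, max_comm]

theorem bb_of_lt {i j : ℕ} (h : i < j) : bb n i j = halfTwist n i j := by
  rw [bb, min_eq_left h.le, max_eq_right h.le]

theorem IsBraidProj.map_bb {π : BraidGroup n →* Equiv.Perm (Fin n)} (hgen : IsBraidProj n π)
    {p q : Fin n} (h : p ≠ q) : π (bb n p q) = Equiv.swap p q := by
  rcases h.lt_or_gt with h | h
  · rw [bb_of_lt h, hgen.map_halfTwist h q.2]
  · rw [bb_comm, bb_of_lt h, hgen.map_halfTwist h p.2, Equiv.swap_comm]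

/-- `sbtw p q r` is the cyclic order on `Fin n` induced by its linear order. -/
theorem bb_conj_bb_of_sbtw {p q r : Fin n} (h : sbtw p q r) :
    bb n p q * bb n q r * (bb n p q)⁻¹ = bb n p r := by
  rcases h with ⟨hpq, hqr⟩ | ⟨hqr, hrp⟩ | ⟨hrp, hpq⟩
  · rw [bb_of_lt hpq, bb_of_lt hqr, bb_of_lt (hpq.trans hqr),
      halfTwist_low_conj_high hpq hqr]
  · rw [bb_comm n p q, bb_comm n p r, bb_of_lt hqr, bb_of_lt hrp, bb_of_lt (hqr.trans hrp),
      halfTwist_outer_conj_low hqr hrp p.2]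
  · rw [bb_comm n q r, bb_comm n p r, bb_of_lt hpq, bb_of_lt hrp, bb_of_lt (hrp.trans hpq),
      halfTwist_high_conj_outer hrp hpq q.2]

theorem bb_conj_bb_of_sbtw' {p q r : Fin n} (h : sbtw p r q) :
    bb n p q * bb n q r * (bb n p q)⁻¹ = bb n p q ^ 2 * bb n p r * (bb n p q ^ 2)⁻¹ := by
  rw [← bb_conj_bb_of_sbtw (sbtw_cyclic_right h), bb_comm n q p, sq]
  group

theorem commute_bb_bb {p q r s : Fin n} (hpq : p < q) (hrs : r < s)
    (h : q < r ∨ p < r ∧ s < q) : Commute (bb n p q) (bb n r s) := by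
  rw [bb_of_lt hpq, bb_of_lt hrs]
  rcases h with h | ⟨hpr, hsq⟩
  · exact commute_halfTwist_of_lt hpq h hrs
  · exact commute_halfTwist_of_nested hpr hrs hsq q.2

end HalfTwists

section PureBraids

variable {n : ℕ} {π : BraidGroup n →* Equiv.Perm (Fin n)}

theorem commute_mk_of_mem_ker {x y : BraidGroup n} (hx : π x = 1) (hy : π y = 1) :
    Commute (QuotientGroup.mk x : Gq n π) (QuotientGroup.mk y) := by
  rw [← commutatorElement_eq_one_iff_commute]
  exact (QuotientGroup.eq_one_iff _).2 (Subgroup.commutator_mem_commutator hx hy)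

theorem ht_comm (i j : ℕ) : ht n π i j = ht n π j i := by
  rw [ht, ht, bb_comm]

theorem ft_comm (i j : ℕ) : ft n π i j = ft n π j i := by
  rw [ft, ft, bb_comm]

theorem ft_eq_ht_sq (i j : ℕ) : ft n π i j = ht n π i j ^ 2 := rfl

theorem IsBraidProj.map_bb_sq (hgen : IsBraidProj n π) {p q : Fin n} (h : p ≠ q) :
    π (bb n p q ^ 2) = 1 := by
  rw [map_pow, hgen.map_bb h, sq, Equiv.swap_mul_self]

theorem IsBraidProj.commute_ft_ft (hgen : IsBraidProj n π) {p q r s : Fin n} (hpq : p ≠ q)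
    (hrs : r ≠ s) : Commute (ft n π p q) (ft n π r s) :=
  commute_mk_of_mem_ker (hgen.map_bb_sq hpq) (hgen.map_bb_sq hrs)

theorem ht_conj_ht_of_sbtw {p q r : Fin n} (h : sbtw p q r) :
    ht n π p q * ht n π q r * (ht n π p q)⁻¹ = ht n π p r := by
  simp only [ht, ← QuotientGroup.mk_mul, ← QuotientGroup.mk_inv, bb_conj_bb_of_sbtw h]

theorem ht_conj_ht_of_sbtw' {p q r : Fin n} (h : sbtw p r q) :
    ht n π p q * ht n π q r * (ht n π p q)⁻¹ =
      ft n π p q * ht n π p r * (ft n π p q)⁻¹ := by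
  simp only [ht, ft, ← QuotientGroup.mk_mul, ← QuotientGroup.mk_inv, bb_conj_bb_of_sbtw' h]

theorem ht_conj_ft_self (i j : ℕ) :
    ht n π i j * ft n π i j * (ht n π i j)⁻¹ = ft n π i j :=
  ((Commute.refl _).pow_right 2).mul_inv_cancel

theorem IsBraidProj.ht_conj_ft_of_ne (hgen : IsBraidProj n π) {p q r : Fin n} (hpq : p ≠ q)
    (hqr : q ≠ r) (hpr : p ≠ r) :
    ht n π p q * ft n π q r * (ht n π p q)⁻¹ = ft n π p r := by
  rw [ft_eq_ht_sq q r, ← conj_pow]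
  rcases sbtw_or_sbtw_of_ne hpq hqr hpr with h | h
  · rw [ht_conj_ht_of_sbtw h, ← ft_eq_ht_sq]
  · rw [ht_conj_ht_of_sbtw' h, conj_pow, ← ft_eq_ht_sq,
      (hgen.commute_ft_ft hpq hpr).mul_inv_cancel]

theorem IsBraidProj.ht_conj_ft_of_mem (hgen : IsBraidProj n π) {r s p q : Fin n} (hrs : r ≠ s)
    (hpq : p ≠ q) (hp : p = r ∨ p = s) :
    ht n π r s * ft n π p q * (ht n π r s)⁻¹ =
      ft n π (Equiv.swap r s p) (Equiv.swap r s q) := by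
  by_cases hq : q = r ∨ q = s
  · obtain ⟨rfl, rfl⟩ | ⟨rfl, rfl⟩ : p = r ∧ q = s ∨ p = s ∧ q = r := by
      rcases hp with rfl | rfl <;> rcases hq with rfl | rfl <;> simp_all
    · rw [Equiv.swap_apply_left, Equiv.swap_apply_right, ht_conj_ft_self, ft_comm]
    · rw [Equiv.swap_apply_left, Equiv.swap_apply_right, ht_comm, ht_conj_ft_self, ft_comm]
  · rw [not_or] at hq
    rw [Equiv.swap_apply_of_ne_of_ne hq.1 hq.2]
    rcases hp with rfl | rfl
    · rw [Equiv.swap_apply_left, ht_comm, hgen.ht_conj_ft_of_ne hrs.symm hpq (Ne.symm hq.2)]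
    · rw [Equiv.swap_apply_right, hgen.ht_conj_ft_of_ne hrs hpq (Ne.symm hq.1)]

end PureBraids

section Action

variable {n : ℕ} {π : BraidGroup n →* Equiv.Perm (Fin n)}

theorem commute_bgen_bb {t p q : ℕ} (hpq : p < q) (hq : q < n) (hp : p ≠ t ∧ p ≠ t + 1)
    (hq' : q ≠ t ∧ q ≠ t + 1) : Commute (bgen n t) (bb n p q) := by
  rw [bb_of_lt hpq, ← halfTwist_succ]
  rcases (show q < t ∨ t + 1 < p ∨ p < t ∧ t + 1 < q by omega) with h | h | h
  · exact (commute_halfTwist_of_lt hpq h (by omega)).symm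
  · exact commute_halfTwist_of_lt (by omega) h hpq
  · exact (commute_halfTwist_of_nested h.1 (by omega) h.2 hq).symm

theorem IsBraidProj.mk_bgen_conj_ft (hgen : IsBraidProj n π) {t : ℕ} (htn : t < n - 1)
    {p q : Fin n} (hpq : p ≠ q) :
    (QuotientGroup.mk (bgen n t) : Gq n π) * ft n π p q * (QuotientGroup.mk (bgen n t))⁻¹ =
      ft n π (π (bgen n t) p) (π (bgen n t) q) := by
  have hxy : (⟨t, by omega⟩ : Fin n) < ⟨t + 1, by omega⟩ := Fin.mk_lt_mk.2 t.lt_succ_self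
  have hb : (QuotientGroup.mk (bgen n t) : Gq n π) =
      ht n π (⟨t, by omega⟩ : Fin n) (⟨t + 1, by omega⟩ : Fin n) := by
    rw [ht, bb_of_lt hxy, halfTwist_succ]
  rw [hgen.map_bgen htn]
  by_cases hp : p = ⟨t, by omega⟩ ∨ p = ⟨t + 1, by omega⟩
  · rw [hb]
    exact hgen.ht_conj_ft_of_mem hxy.ne hpq hp
  by_cases hq : q = ⟨t, by omega⟩ ∨ q = ⟨t + 1, by omega⟩
  · rw [hb, ft_comm, hgen.ht_conj_ft_of_mem (r := ⟨t, by omega⟩) hxy.ne hpq.symm hq, ft_comm]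
  simp only [not_or] at hp hq
  rw [Equiv.swap_apply_of_ne_of_ne hp.1 hp.2, Equiv.swap_apply_of_ne_of_ne hq.1 hq.2]
  simp only [ne_eq, Fin.ext_iff] at hp hq hpq
  have hc : Commute (bgen n t) (bb n p q) := by
    rcases Nat.lt_or_gt_of_ne hpq with h | h
    · exact commute_bgen_bb h q.2 hp hq
    · exact bb_comm n q p ▸ commute_bgen_bb h p.2 hq hp
  exact ((hc.map (QuotientGroup.mk' _)).pow_right 2).mul_inv_cancel

theorem IsBraidProj.mk_conj_ft (hgen : IsBraidProj n π) (x : BraidGroup n) {p q : Fin n}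
    (hpq : p ≠ q) :
    (QuotientGroup.mk x : Gq n π) * ft n π p q * (QuotientGroup.mk x)⁻¹ =
      ft n π (π x p) (π x q) := by
  let H : Subgroup (BraidGroup n) :=
    { carrier := {x | ∀ p q : Fin n, p ≠ q →
        (QuotientGroup.mk x : Gq n π) * ft n π p q * (QuotientGroup.mk x)⁻¹ =
          ft n π (π x p) (π x q)}
      mul_mem' := fun {x y} hx hy p q hpq => by
        rw [QuotientGroup.mk_mul, map_mul, Equiv.Perm.mul_apply, Equiv.Perm.mul_apply,
          ← hx _ _ ((π y).injective.ne hpq), ← hy p q hpq]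
        group
      one_mem' := fun p q _ => by simp
      inv_mem' := fun {x} hx p q hpq => by
        have h := hx ((π x)⁻¹ p) ((π x)⁻¹ q) ((π x)⁻¹.injective.ne hpq)
        simp only [← Equiv.Perm.mul_apply, mul_inv_cancel, Equiv.Perm.one_apply] at h
        rw [map_inv, ← h, QuotientGroup.mk_inv]
        group }
  refine PresentedGroup.generated_by _ H (fun i p q hpq => ?_) x p q hpq
  have hi : (PresentedGroup.of i : BraidGroup n) = bgen n i := by rw [bgen, dif_pos i.2]
  rw [hi]
  exact hgen.mk_bgen_conj_ft i.2 hpq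

theorem IsBraidProj.ht_conj_ft (hgen : IsBraidProj n π) {r s p q : Fin n} (hrs : r ≠ s)
    (hpq : p ≠ q) :
    ht n π r s * ft n π p q * (ht n π r s)⁻¹ =
      ft n π (Equiv.swap r s p) (Equiv.swap r s q) := by
  rw [← hgen.map_bb hrs]
  exact hgen.mk_conj_ft _ hpq

end Action

section Cocycle

open scoped commutatorElement

variable {n : ℕ} {π : BraidGroup n →* Equiv.Perm (Fin n)}

theorem IsBraidProj.ht_conj_ht_mul_inv_of_sbtw (hgen : IsBraidProj n π) {i j k : Fin n}
    (h : sbtw i k j) :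
    ht n π i j * ht n π j k * (ht n π i j)⁻¹ * (ht n π i k)⁻¹ =
      ft n π i j * (ft n π k j)⁻¹ := by
  have hik : i ≠ k := fun e => sbtw_irrefl_left (e ▸ h)
  have hjk : j ≠ k := fun e => sbtw_irrefl_right (e ▸ h)
  have hij : i ≠ j := fun e => sbtw_irrefl_left_right (e ▸ h)
  calc ht n π i j * ht n π j k * (ht n π i j)⁻¹ * (ht n π i k)⁻¹
      = ft n π i j * (ht n π i k * ft n π i j * (ht n π i k)⁻¹)⁻¹ := by
        rw [ht_conj_ht_of_sbtw' h]; group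
    _ = ft n π i j * (ft n π k j)⁻¹ := by
        rw [hgen.ht_conj_ft hik hij, Equiv.swap_apply_left,
          Equiv.swap_apply_of_ne_of_ne hij.symm hjk]

theorem IsBraidProj.ht_conj_ht_of_interleaved (hgen : IsBraidProj n π) {a b c d : Fin n}
    (hab : a < b) (hbc : b < c) (hcd : c < d) :
    ht n π a c * ht n π b d * (ht n π a c)⁻¹ =
      (ft n π a c * (ft n π b c)⁻¹ * ft n π a b) * ht n π b d *
        (ft n π a c * (ft n π b c)⁻¹ * ft n π a b)⁻¹ := by
  -- conjugate each factor of `b_{b,d} = b_{b,c} b_{c,d} b_{b,c}⁻¹` by `b_{a,c}`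
  have e1 : ht n π b c * ht n π c d * (ht n π b c)⁻¹ = ht n π b d :=
    ht_conj_ht_of_sbtw (Or.inl ⟨hbc, hcd⟩)
  have e2 : ht n π a c * ht n π c b * (ht n π a c)⁻¹ =
      ft n π a c * ht n π a b * (ft n π a c)⁻¹ :=
    ht_conj_ht_of_sbtw' (Or.inl ⟨hab, hbc⟩)
  have e3 : ht n π a c * ht n π c d * (ht n π a c)⁻¹ = ht n π a d :=
    ht_conj_ht_of_sbtw (Or.inl ⟨hab.trans hbc, hcd⟩)
  have e4 : ht n π b a * ht n π a d * (ht n π b a)⁻¹ =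
      ft n π b a * ht n π b d * (ft n π b a)⁻¹ :=
    ht_conj_ht_of_sbtw' (Or.inr (Or.inr ⟨hab, hbc.trans hcd⟩))
  have e5 : ht n π a b * ft n π a c * (ht n π a b)⁻¹ = ft n π b c := by
    rw [hgen.ht_conj_ft hab.ne (hab.trans hbc).ne, Equiv.swap_apply_left,
      Equiv.swap_apply_of_ne_of_ne (hab.trans hbc).ne' hbc.ne']
  calc ht n π a c * ht n π b d * (ht n π a c)⁻¹
      = (ht n π a c * ht n π c b * (ht n π a c)⁻¹) *
          (ht n π a c * ht n π c d * (ht n π a c)⁻¹) *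
          (ht n π a c * ht n π c b * (ht n π a c)⁻¹)⁻¹ := by
        rw [← e1, ht_comm b c]; group
    _ = ft n π a c * (ht n π a b * ft n π a c * (ht n π a b)⁻¹)⁻¹ *
          (ht n π a b * ht n π a d * (ht n π a b)⁻¹) *
          (ht n π a b * ft n π a c * (ht n π a b)⁻¹) * (ft n π a c)⁻¹ := by
        rw [e2, e3]; group
    _ = (ft n π a c * (ft n π b c)⁻¹ * ft n π a b) * ht n π b d *
          (ft n π a c * (ft n π b c)⁻¹ * ft n π a b)⁻¹ := by
        rw [e5, ht_comm a b, e4, ft_comm b a]; group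

theorem IsBraidProj.commutatorElement_ht_ht_of_lt (hgen : IsBraidProj n π) {a b c d : Fin n}
    (hab : a < b) (hbc : b < c) (hcd : c < d) :
    ⁅ht n π a c, ht n π b d⁆ =
      (ft n π b c)⁻¹ * ft n π a b * (ft n π a d)⁻¹ * ft n π d c := by
  have hac := (hab.trans hbc).ne
  have hbd := hbc.trans hcd
  have hconj : ht n π b d * (ft n π a c * (ft n π b c)⁻¹ * ft n π a b) * (ht n π b d)⁻¹ =
      ft n π a c * (ft n π d c)⁻¹ * ft n π a d := by
    calc ht n π b d * (ft n π a c * (ft n π b c)⁻¹ * ft n π a b) * (ht n π b d)⁻¹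
        = (ht n π b d * ft n π a c * (ht n π b d)⁻¹) *
            (ht n π b d * ft n π b c * (ht n π b d)⁻¹)⁻¹ *
            (ht n π b d * ft n π a b * (ht n π b d)⁻¹) := by group
      _ = ft n π a c * (ft n π d c)⁻¹ * ft n π a d := by
        rw [hgen.ht_conj_ft hbd.ne hac, hgen.ht_conj_ft hbd.ne hbc.ne,
          hgen.ht_conj_ft hbd.ne hab.ne, Equiv.swap_apply_left,
          Equiv.swap_apply_of_ne_of_ne hab.ne (hab.trans hbd).ne,
          Equiv.swap_apply_of_ne_of_ne hbc.ne' hcd.ne]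
  have hcomm : Commute (ft n π a c)
      ((ft n π b c)⁻¹ * ft n π a b * (ft n π a d)⁻¹ * ft n π d c) :=
    (((hgen.commute_ft_ft hac hbc.ne).inv_right.mul_right
      (hgen.commute_ft_ft hac hab.ne)).mul_right
      (hgen.commute_ft_ft hac (hab.trans hbd).ne).inv_right).mul_right
      (hgen.commute_ft_ft hac hcd.ne')
  calc ⁅ht n π a c, ht n π b d⁆
      = ft n π a c * (ft n π b c)⁻¹ * ft n π a b *
          (ht n π b d * (ft n π a c * (ft n π b c)⁻¹ * ft n π a b) * (ht n π b d)⁻¹)⁻¹ := by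
        rw [commutatorElement_def, hgen.ht_conj_ht_of_interleaved hab hbc hcd]; group
    _ = ft n π a c * ((ft n π b c)⁻¹ * ft n π a b * (ft n π a d)⁻¹ * ft n π d c) *
          (ft n π a c)⁻¹ := by rw [hconj]; group
    _ = (ft n π b c)⁻¹ * ft n π a b * (ft n π a d)⁻¹ * ft n π d c := hcomm.mul_inv_cancel

end Cocycle

section ModFour

open scoped commutatorElement

variable {n : ℕ} {π : BraidGroup n →* Equiv.Perm (Fin n)}

theorem mk_ft (i j : ℕ) : (QuotientGroup.mk (ft n π i j) : Zq n π) = fgZ n π i j := rfl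

theorem fgZ_comm (i j : ℕ) : fgZ n π i j = fgZ n π j i := by
  rw [fgZ, fgZ, ft_comm]

theorem fgZ_inv {p q : Fin n} (h : p ≠ q) : (fgZ n π p q)⁻¹ = fgZ n π p q := by
  have hsq : fgZ n π p q ^ 2 = 1 := by
    rw [fgZ, ← QuotientGroup.mk_pow, QuotientGroup.eq_one_iff]
    apply Subgroup.subset_normalClosure
    rcases h.lt_or_gt with h | h
    · exact ⟨p, q, h, q.2, rfl⟩
    · exact ⟨q, p, h, p.2, by rw [ft_comm]⟩
  exact inv_eq_of_mul_eq_one_right (by rwa [sq] at hsq)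

theorem IsBraidProj.commute_fgZ (hgen : IsBraidProj n π) {p q r s : Fin n} (hpq : p ≠ q)
    (hrs : r ≠ s) : Commute (fgZ n π p q) (fgZ n π r s) :=
  (hgen.commute_ft_ft hpq hrs).map (QuotientGroup.mk' _)

theorem commute_ht_ht {i j k l : Fin n} (hij : i < j) (hkl : k < l)
    (h : j < k ∨ l < i ∨ i < k ∧ l < j ∨ k < i ∧ j < l) :
    Commute (ht n π i j) (ht n π k l) := by
  refine Commute.map ?_ (QuotientGroup.mk' _)
  rcases h with h | h | h | h
  · exact commute_bb_bb hij hkl (Or.inl h)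
  · exact (commute_bb_bb hkl hij (Or.inl h)).symm
  · exact commute_bb_bb hij hkl (Or.inr h)
  · exact (commute_bb_bb hkl hij (Or.inr h)).symm

theorem IsBraidProj.mk_commutatorElement_ht_ht (hgen : IsBraidProj n π) {i j k l : Fin n}
    (hij : i < j) (hkl : k < l) (hdisj : ({i, j} : Finset (Fin n)) ∩ {k, l} = ∅) :
    (QuotientGroup.mk ⁅ht n π i j, ht n π k l⁆ : Zq n π) =
      if (i < k ∧ k < j ∧ j < l) ∨ (k < i ∧ i < l ∧ l < j) then
        fgZ n π i k * fgZ n π k j * fgZ n π i l * fgZ n π l j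
      else 1 := by
  have hne : (k ≠ i ∧ k ≠ j) ∧ l ≠ i ∧ l ≠ j := by
    simpa using Finset.disjoint_iff_inter_eq_empty.2 hdisj
  split_ifs with h
  · rcases h with ⟨hik, hkj, hjl⟩ | ⟨hki, hil, hlj⟩
    · rw [hgen.commutatorElement_ht_ht_of_lt hik hkj hjl]
      simp only [QuotientGroup.mk_mul, QuotientGroup.mk_inv, mk_ft, fgZ_inv, hkj.ne,
        (hik.trans (hkj.trans hjl)).ne, ne_eq, not_false_eq_true]
      rw [(hgen.commute_fgZ hkj.ne hik.ne).eq]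
    · rw [← commutatorElement_inv, hgen.commutatorElement_ht_ht_of_lt hki hil hlj]
      simp only [QuotientGroup.mk_mul, QuotientGroup.mk_inv, mk_ft, mul_inv_rev, inv_inv]
      rw [fgZ_inv hlj.ne', fgZ_inv hki.ne, fgZ_comm j l, fgZ_comm k i]
      have hkj' := hki.trans (hil.trans hlj)
      calc fgZ n π l j * (fgZ n π k j * (fgZ n π i k * fgZ n π i l))
          = fgZ n π k j * fgZ n π i k * fgZ n π i l * fgZ n π l j := by
            rw [((hgen.commute_fgZ hlj.ne hkj'.ne).mul_right ((hgen.commute_fgZ hlj.ne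
              hki.ne').mul_right (hgen.commute_fgZ hlj.ne hil.ne))).eq]
            simp only [mul_assoc]
        _ = fgZ n π i k * fgZ n π k j * fgZ n π i l * fgZ n π l j := by
            rw [(hgen.commute_fgZ hkj'.ne hki.ne').eq]
  · rw [commutatorElement_eq_one_iff_commute.2 (commute_ht_ht hij hkl (by omega)),
      QuotientGroup.mk_one]

theorem IsBraidProj.mk_ht_conj_ht_mul_inv (hgen : IsBraidProj n π) {i j k : Fin n}
    (hik : i ≠ k) (hij : i ≠ j) (hkj : k ≠ j) :
    (QuotientGroup.mk (ht n π i j * ht n π j k * (ht n π i j)⁻¹ * (ht n π i k)⁻¹) :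
      Zq n π) =
      if (i < k ∧ k < j) ∨ (j < i ∧ i < k) ∨ (k < j ∧ j < i) then
        fgZ n π i j * fgZ n π j k
      else 1 := by
  split_ifs with h
  · rw [hgen.ht_conj_ht_mul_inv_of_sbtw (by rw [sbtw_iff]; tauto), QuotientGroup.mk_mul,
      QuotientGroup.mk_inv, mk_ft, mk_ft, fgZ_inv hkj, fgZ_comm k j]
  · have hijk := (sbtw_or_sbtw_of_ne hij hkj.symm hik).resolve_right (by rw [sbtw_iff]; tauto)
    rw [ht_conj_ht_of_sbtw hijk, mul_inv_cancel, QuotientGroup.mk_one]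

end ModFour

theorem statement17_general (n : ℕ) (π : BraidGroup n →* Equiv.Perm (Fin n))
    (hgen : IsBraidProj n π)
    (s : Equiv.Perm (Fin n) → Gq n π)
    (hs : ∀ i j : Fin n, i < j → s (Equiv.swap i j) = ht n π i j)
    (hd : ∀ i j k l : Fin n, i < j → k < l →
      ({i, j} : Finset (Fin n)) ∩ {k, l} = ∅ →
      s (Equiv.swap i j * Equiv.swap k l) =
        if j < l then ht n π i j * ht n π k l else ht n π k l * ht n π i j) :
    -- κ = η ∘ φ: the cocycle of the section `s' = f ∘ s` of `𝒵_n` is the image under the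
    -- natural projection `f : G_n → 𝒵_n` of the cocycle `φ` of the section `s` of `G_n`
    (∀ g h : Equiv.Perm (Fin n),
      ((QuotientGroup.mk (s g) : Zq n π) * QuotientGroup.mk (s h) *
          (QuotientGroup.mk (s (g * h)))⁻¹) =
        QuotientGroup.mk (s g * s h * (s (g * h))⁻¹)) ∧
    -- κ(c̃_{i,j}) = ḡ_{i,j}
    (∀ i j : Fin n, i < j →
      (QuotientGroup.mk (s (Equiv.swap i j) * s (Equiv.swap i j)) : Zq n π) =
        fgZ n π i j) ∧
    -- κ(d̃_{i,j,k,ℓ})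
    (∀ i j k l : Fin n, i < j → k < l →
      ({i, j} : Finset (Fin n)) ∩ {k, l} = ∅ →
      (QuotientGroup.mk
          ((s (Equiv.swap i j) * s (Equiv.swap k l) *
              (s (Equiv.swap i j * Equiv.swap k l))⁻¹) *
            (s (Equiv.swap k l) * s (Equiv.swap i j) *
              (s (Equiv.swap k l * Equiv.swap i j))⁻¹)⁻¹) : Zq n π) =
        if (i < k ∧ k < j ∧ j < l) ∨ (k < i ∧ i < l ∧ l < j) then
          fgZ n π i k * fgZ n π k j * fgZ n π i l * fgZ n π l j
        else 1) ∧
    -- κ(ẽ_{i,k,j})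
    (∀ i k j : Fin n, i ≠ k → i ≠ j → k ≠ j →
      (QuotientGroup.mk
          ((s (Equiv.swap i j) * s (Equiv.swap j k) *
              (s (Equiv.swap i j * Equiv.swap j k))⁻¹) *
            (s (Equiv.swap i k) * s (Equiv.swap i j) *
              (s (Equiv.swap i k * Equiv.swap i j))⁻¹)⁻¹) : Zq n π) =
        if (i < k ∧ k < j) ∨ (j < i ∧ i < k) ∨ (k < j ∧ j < i) then
          fgZ n π i j * fgZ n π j k
        else 1) := by
  have hs' : ∀ p q : Fin n, p ≠ q → s (Equiv.swap p q) = ht n π p q := fun p q h => by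
    rcases h.lt_or_gt with h | h
    · exact hs p q h
    · rw [Equiv.swap_comm, hs q p h, ht_comm]
  refine ⟨fun _ _ => rfl, fun i j hij => ?_, fun i j k l hij hkl hdisj => ?_,
    fun i k j hik hij hkj => ?_⟩
  · rw [hs i j hij, ← sq]
    rfl
  · have hjl : j ≠ l := fun h => by simp [h, Finset.ext_iff] at hdisj
    rw [← hgen.mk_commutatorElement_ht_ht hij hkl hdisj, hd i j k l hij hkl hdisj,
      hd k l i j hkl hij (by rwa [Finset.inter_comm]), hs i j hij, hs k l hkl]
    rcases hjl.lt_or_gt with h | h <;>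
      simp only [h, h.not_gt, if_true, if_false, commutatorElement_def] <;> group
  · rw [← hgen.mk_ht_conj_ht_mul_inv hik hij hkj, swap_mul_swap_eq_swap_mul_swap hik.symm hkj,
      hs' i j hij, hs' j k hkj.symm, hs' i k hik]
    congr 1
    group

/-- The cocycle `κ` classifying `𝒵_n` as an extension of `S_n` by
`ℤ₂^(n choose 2)` equals `η ∘ φ`, where `φ` is the cocycle classifying
`G_n = B_n/[PB_n,PB_n]` and `η` is the mod 2 reduction (realized as the natural projection
`f : G_n → 𝒵_n = G_n/A_n` restricted to the kernels).  Explicitly, with the section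
`s' = f ∘ s`: `κ(c̃_{i,j}) = ḡ_{i,j}`;
`κ(d̃_{i,j,k,ℓ}) = ḡ_{i,k} + ḡ_{k,j} + ḡ_{i,ℓ} + ḡ_{ℓ,j}` if `i<k<j<ℓ` or `k<i<ℓ<j`, else
`0`; `κ(ẽ_{i,k,j}) = ḡ_{i,j} + ḡ_{j,k}` if `i<k<j`, `j<i<k`, or `k<j<i`, else `0`. -/
theorem statement17 (n : ℕ) (π : BraidGroup n →* Equiv.Perm (Fin n))
    (hgen : IsBraidProj n π) (hsurj : Function.Surjective π)
    (p : Gq n π →* Equiv.Perm (Fin n))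
    (hp : ∀ x : BraidGroup n, p (QuotientGroup.mk x) = π x)
    (s : Equiv.Perm (Fin n) → Gq n π)
    (hsec : ∀ g, p (s g) = g) (hone : s 1 = 1)
    (hs : ∀ i j : Fin n, i < j → s (Equiv.swap i j) = ht n π i j)
    (hd : ∀ i j k l : Fin n, i < j → k < l →
      ({i, j} : Finset (Fin n)) ∩ {k, l} = ∅ →
      s (Equiv.swap i j * Equiv.swap k l) =
        if j < l then ht n π i j * ht n π k l else ht n π k l * ht n π i j)
    (he : ∀ i k j : Fin n, i ≠ k → i ≠ j → k ≠ j →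
      s (Equiv.swap i j * Equiv.swap j k) =
        if k < j ∧ i < j then ht n π i k * ht n π i j
        else if i < k ∧ j < k then ht n π i j * ht n π j k
        else ht n π k j * ht n π k i) :
    -- κ = η ∘ φ: the cocycle of the section `s' = f ∘ s` of `𝒵_n` is the image under the
    -- natural projection `f : G_n → 𝒵_n` of the cocycle `φ` of the section `s` of `G_n`
    (∀ g h : Equiv.Perm (Fin n),
      ((QuotientGroup.mk (s g) : Zq n π) * QuotientGroup.mk (s h) *
          (QuotientGroup.mk (s (g * h)))⁻¹) =
        QuotientGroup.mk (s g * s h * (s (g * h))⁻¹)) ∧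
    -- κ(c̃_{i,j}) = ḡ_{i,j}
    (∀ i j : Fin n, i < j →
      (QuotientGroup.mk (s (Equiv.swap i j) * s (Equiv.swap i j)) : Zq n π) =
        fgZ n π i j) ∧
    -- κ(d̃_{i,j,k,ℓ})
    (∀ i j k l : Fin n, i < j → k < l →
      ({i, j} : Finset (Fin n)) ∩ {k, l} = ∅ →
      (QuotientGroup.mk
          ((s (Equiv.swap i j) * s (Equiv.swap k l) *
              (s (Equiv.swap i j * Equiv.swap k l))⁻¹) *
            (s (Equiv.swap k l) * s (Equiv.swap i j) *
              (s (Equiv.swap k l * Equiv.swap i j))⁻¹)⁻¹) : Zq n π) =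
        if (i < k ∧ k < j ∧ j < l) ∨ (k < i ∧ i < l ∧ l < j) then
          fgZ n π i k * fgZ n π k j * fgZ n π i l * fgZ n π l j
        else 1) ∧
    -- κ(ẽ_{i,k,j})
    (∀ i k j : Fin n, i ≠ k → i ≠ j → k ≠ j →
      (QuotientGroup.mk
          ((s (Equiv.swap i j) * s (Equiv.swap j k) *
              (s (Equiv.swap i j * Equiv.swap j k))⁻¹) *
            (s (Equiv.swap i k) * s (Equiv.swap i j) *
              (s (Equiv.swap i k * Equiv.swap i j))⁻¹)⁻¹) : Zq n π) =
        if (i < k ∧ k < j) ∨ (j < i ∧ i < k) ∨ (k < j ∧ j < i) then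
          fgZ n π i j * fgZ n π j k
        else 1) :=
  statement17_general n π hgen s hs hd
end

section
/- For all n ≥ 1, the level 4 congruence subgroup B_n[4] (equal to PB_n²) is normally generated as a subgroup of B_n by the elements [b_i², b_{i+1}²] for 1 ≤ i ≤ n−1, [b_{i,i+2}², b_{i+1,i+3}²] for 1 ≤ i ≤ n−4, and b_i⁴ for 1 ≤ i ≤ n−1. Equivalently, the quotient of B_n (with Artin presentation) by the normal closure of these elements is isomorphic to 𝒵_n = B_n/PB_n². -/
open scoped commutatorElement

/-!
Let `N` be the normal closure of the listed elements. Every listed element is a square or a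
commutator of pure braids, and `⁅a, b⁆ = (ab)² (b⁻¹a⁻¹b)² (b⁻¹)²`, so `N ≤ PB_n²`.

Conversely, let `A r s = twistSq f r s` be the image of the squared half twist `b_{r,s}²` under
`f : B_n → B_n ⧸ N`. Conjugating the relations `⁅b_i², b_{i+1}²⁆ = 1` shows that `A r s` and
`A t u` commute when the arcs `[r, s]`, `[t, u]` share an endpoint or are disjoint. For linked and nested arcs on strands
`r < m < u < w`, the square of the Garside element `Δ = xyzxyx` of the copy of `B_4` spanned by
`x = b_{r,m}`, `y = b_{m,u}`, `z = b_{u,w}` is central there and is the product of the six `A`'s of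
these strands; this forces the remaining two pairs to commute. As `A r s ^ 2 = 1` (from `b_i⁴ = 1`)
the `A`'s generate an elementary abelian `2`-group `M`, normal because conjugation by `b_k`
permutes the `A`'s. Modulo `M` the generators `b_k` satisfy the Coxeter relations of type
`A_{n-1}`, so that quotient has at most `n!` elements (every element is a product of descending
words `b_{m-1} ⋯ b_j`, one for each `m`). Comparing with `S_n` shows that `PB_n` maps into `M`,
hence `y² ∈ N` for every pure braid `y`.
-/

section Conjugation

variable {G : Type*} [Group G]

theorem semiconjBy_mul_of_braid {a b : G} (h : a * b * a = b * a * b) :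
    SemiconjBy (a * b) a b := by
  rw [SemiconjBy, h, mul_assoc]

theorem Commute.of_mul_right {p a q : G} (h : Commute p (a * q)) (ha : Commute p a) :
    Commute p q := by
  simpa using ha.inv_right.mul_right h

theorem Commute.of_mul_left {p q b : G} (h : Commute p (q * b)) (hb : Commute p b) :
    Commute p q := by
  simpa using h.mul_right hb.inv_right

theorem conj_eq_iff_braid {x y : G} : x * y * x⁻¹ = y⁻¹ * x * y ↔ x * y * x = y * x * y := by
  rw [← mul_left_cancel_iff (a := y), ← mul_right_cancel_iff (a := x)]
  group
  exact eq_comm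

theorem Commute.conj_conj_comm {a g : G} (h : Commute a g) (x : G) :
    a * (g * x * g⁻¹) * a⁻¹ = g * (a * x * a⁻¹) * g⁻¹ :=
  calc a * (g * x * g⁻¹) * a⁻¹ = a * g * x * (a * g)⁻¹ := by group
    _ = g * a * x * (g * a)⁻¹ := by rw [h.eq]
    _ = g * (a * x * a⁻¹) * g⁻¹ := by group

theorem Commute.conj_by_conj {g y : G} (h : Commute g y) (x : G) :
    g * x * g⁻¹ * y * (g * x * g⁻¹)⁻¹ = g * (x * y * x⁻¹) * g⁻¹ :=
  calc g * x * g⁻¹ * y * (g * x * g⁻¹)⁻¹ = g * x * (g⁻¹ * y * g) * x⁻¹ * g⁻¹ := by group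
    _ = g * (x * y * x⁻¹) * g⁻¹ := by rw [h.inv_left.eq]; group

theorem inv_mul_mul_eq_mul_mul_inv_of_commute_sq {c x : G} (h : Commute (c ^ 2) x) :
    c⁻¹ * x * c = c * x * c⁻¹ :=
  calc c⁻¹ * x * c = c⁻¹ * (c ^ 2 * x * (c ^ 2)⁻¹) * c := by rw [h.mul_inv_cancel]
    _ = c * x * c⁻¹ := by group

end Conjugation

section Garside

variable {G : Type*} [Group G] {x y z : G}

theorem semiconjBy_mul_mul_left (hxy : x * y * x = y * x * y) (hxz : Commute x z) :
    SemiconjBy (x * y * z) x y :=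
  (semiconjBy_mul_of_braid hxy).mul_left hxz.symm

theorem semiconjBy_mul_mul_right (hyz : y * z * y = z * y * z) (hxz : Commute x z) :
    SemiconjBy (x * y * z) y z := by
  rw [mul_assoc]; exact SemiconjBy.mul_left hxz (semiconjBy_mul_of_braid hyz)

theorem garside_eq_mul (hxz : Commute x z) :
    x * y * z * x * y * x = x * y * x * (z * y * x) := by
  simp only [mul_assoc, hxz.left_comm]

variable (hxy : x * y * x = y * x * y) (hyz : y * z * y = z * y * z) (hxz : Commute x z)
include hxy hyz hxz

theorem semiconjBy_garside_left : SemiconjBy (x * y * z * x * y * x) x z := by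
  have h := ((semiconjBy_mul_mul_right hyz hxz).mul_left (semiconjBy_mul_of_braid hxy)).mul_left
    (Commute.refl x)
  simpa only [mul_assoc] using h

theorem semiconjBy_garside_right : SemiconjBy (x * y * z * x * y * x) z x := by
  rw [garside_eq_mul hxz]
  exact (semiconjBy_mul_mul_right hxy.symm (Commute.refl x)).mul_left
    (semiconjBy_mul_mul_left hyz.symm hxz.symm)

theorem commute_garside_sq_left : Commute ((x * y * z * x * y * x) ^ 2) x := by
  rw [sq]
  exact (semiconjBy_garside_right hxy hyz hxz).mul_left (semiconjBy_garside_left hxy hyz hxz)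

omit hyz in
theorem commute_garside_middle : Commute (x * y * z * x * y * x) y := by
  rw [garside_eq_mul hxz]
  exact SemiconjBy.mul_left (semiconjBy_mul_mul_left hxy (Commute.refl x))
    (semiconjBy_mul_mul_right hxy.symm hxz.symm)

theorem garside_sq :
    (x * y * z * x * y * x) ^ 2 =
      x ^ 2 * y ^ 2 * (y⁻¹ * x * y) ^ 2 * z ^ 2 * (z⁻¹ * y * z) ^ 2 *
        (z⁻¹ * (y⁻¹ * x * y) * z) ^ 2 := by
  -- `Δ = (xyx)(zyx) = (xyz)(xyx)`, and `W = (zyx)(xyz)` commutes with `x` and `y`;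
  -- hence `Δ² = (xyx) W (xyx) = (xyx)² W`.
  have hzyx_y := semiconjBy_mul_mul_right hxy.symm hxz.symm
  have hzyx_z := semiconjBy_mul_mul_left hyz.symm hxz.symm
  have hW : Commute (z * y * x * (x * y * z)) (x * y * x) :=
    ((hzyx_y.mul_left (semiconjBy_mul_mul_left hxy hxz)).mul_right
      (hzyx_z.mul_left (semiconjBy_mul_mul_right hyz hxz))).mul_right
      (hzyx_y.mul_left (semiconjBy_mul_mul_left hxy hxz))
  have hΔ₃ : x * y * x * (x * y * x) = x * (x * y * x) * x * y :=
    calc x * y * x * (x * y * x) = x * y * x * (y * x * y) := congrArg _ hxy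
      _ = x * (y * x * y) * x * y := by group
      _ = x * (x * y * x) * x * y := by rw [← hxy]
  calc (x * y * z * x * y * x) ^ 2
      = x * y * x * (z * y * x * (x * y * z)) * (x * y * x) := by
        rw [sq]; nth_rw 1 [garside_eq_mul hxz]; group
    _ = x * y * x * (x * y * x) * (z * y * x * (x * y * z)) := by
        rw [mul_assoc _ (z * y * x * _), hW.eq, ← mul_assoc]
    _ = _ := by rw [hΔ₃]; simp only [sq]; group

end Garside

section Subgroups

variable {G : Type*} [Group G]

theorem Subgroup.sq_eq_one_of_mem_closure {k : Set G} (hcomm : ∀ x ∈ k, ∀ y ∈ k, Commute x y)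
    (hsq : ∀ x ∈ k, x ^ 2 = 1) {x : G} (hx : x ∈ Subgroup.closure k) : x ^ 2 = 1 := by
  have := Subgroup.isMulCommutative_closure hcomm
  induction hx using Subgroup.closure_induction with
  | mem x hx => exact hsq x hx
  | one => exact one_pow 2
  | mul a b ha hb iha ihb =>
    rw [Commute.mul_pow (setLike_mul_comm ha hb), iha, ihb, one_mul]
  | inv a _ ih => rw [inv_pow, ih, inv_one]

theorem Subgroup.normal_closure_of_conj_mem {S T : Set G} (hT : Subgroup.closure T = ⊤)
    (h : ∀ t ∈ T, ∀ s ∈ S, t * s * t⁻¹ ∈ Subgroup.closure S ∧ t⁻¹ * s * t ∈ Subgroup.closure S) :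
    (Subgroup.closure S).Normal := by
  have conj_le (g : G) (hg : ∀ s ∈ S, g * s * g⁻¹ ∈ Subgroup.closure S) :
      Subgroup.closure S ≤ (Subgroup.closure S).comap (MulAut.conj g).toMonoidHom :=
    Subgroup.closure_le _ |>.2 hg
  rw [← Subgroup.normalizer_eq_top_iff, eq_top_iff, ← hT, Subgroup.closure_le]
  intro t ht x
  constructor
  · exact fun hx => conj_le t (fun s hs => (h t ht s hs).1) hx
  · intro hx
    simpa [mul_assoc] using conj_le t⁻¹ (fun s hs => by simpa using (h t ht s hs).2) hx

theorem commutatorElement_eq_sq_mul_sq_mul_sq (a b : G) :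
    ⁅a, b⁆ = (a * b) ^ 2 * (b⁻¹ * a⁻¹ * b) ^ 2 * b⁻¹ ^ 2 := by
  simp only [commutatorElement_def, sq]
  group

theorem commutatorElement_mem_closure_sq {L : Subgroup G} {a b : G} (ha : a ∈ L) (hb : b ∈ L) :
    ⁅a, b⁆ ∈ Subgroup.closure {x | ∃ y ∈ L, x = y ^ 2} := by
  have hsq {y : G} (hy : y ∈ L) : y ^ 2 ∈ Subgroup.closure {x | ∃ y ∈ L, x = y ^ 2} :=
    Subgroup.subset_closure ⟨y, hy, rfl⟩
  rw [commutatorElement_eq_sq_mul_sq_mul_sq]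
  exact mul_mem (mul_mem (hsq (mul_mem ha hb))
    (hsq (mul_mem (mul_mem (inv_mem hb) (inv_mem ha)) hb))) (hsq (inv_mem hb))

theorem normal_closure_sq (L : Subgroup G) [L.Normal] :
    (Subgroup.closure {x | ∃ y ∈ L, x = y ^ 2}).Normal := by
  refine Subgroup.normal_closure_of_conj_mem Subgroup.closure_univ ?_
  rintro g - _ ⟨y, hy, rfl⟩
  exact ⟨Subgroup.subset_closure ⟨_, ‹L.Normal›.conj_mem y hy g, conj_pow.symm⟩,
    Subgroup.subset_closure ⟨g⁻¹ * y * g, by simpa using ‹L.Normal›.conj_mem y hy g⁻¹,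
      by simpa using (conj_pow (a := g⁻¹)).symm⟩⟩

theorem MonoidHom.ker_le_of_card_quotient_le {P : Type*} [Group P] {π : G →* P}
    (hπ : Function.Surjective π) {K : Subgroup G} [K.Normal] (hK : K ≤ π.ker) [Finite (G ⧸ K)]
    (hcard : Nat.card (G ⧸ K) ≤ Nat.card P) : π.ker ≤ K := by
  set φ := QuotientGroup.lift K π hK
  have hφ : Function.Bijective φ :=
    (QuotientGroup.lift_surjective_of_surjective _ _ hπ _).bijective_of_nat_card_le hcard
  intro y hy
  rw [← QuotientGroup.eq_one_iff]
  exact hφ.1 (by rw [map_one]; exact hy)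

end Subgroups

section CoxeterA

variable {G : Type*} [Group G] (t : ℕ → G)

-- `t (m - 1) * t (m - 2) * ⋯ * t j`
noncomputable def descProd (j m : ℕ) : G := ((List.range' j (m - j)).map t).reverse.prod

noncomputable def descProdCover : ℕ → Set G
  | 0 => {1}
  | m + 1 => (fun p : G × ℕ => p.1 * descProd t p.2 m) '' (descProdCover m ×ˢ Set.Iic m)

variable {t}

theorem descProd_self (m : ℕ) : descProd t m m = 1 := by simp [descProd]

theorem descProd_eq_mul {j m : ℕ} (h : j < m) : descProd t j m = descProd t (j + 1) m * t j := by
  rw [descProd, descProd, show m - j = m - (j + 1) + 1 by omega, List.range'_succ]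
  simp

theorem commute_descProd {k j m : ℕ} (h : ∀ i, j ≤ i → i < m → Commute (t k) (t i)) :
    Commute (t k) (descProd t j m) := by
  refine Commute.list_prod_right _ _ fun x hx => ?_
  obtain ⟨i, hi, rfl⟩ := List.mem_map.1 (List.mem_reverse.1 hx)
  rw [List.mem_range'_1] at hi
  exact h i hi.1 (by omega)

theorem descProd_mul_of_lt {n j k m : ℕ} (hjk : j < k) (hkm : k < m) (hm : m < n)
    (hbraid : ∀ k, k + 2 < n → t k * t (k + 1) * t k = t (k + 1) * t k * t (k + 1))
    (hfar : ∀ k l, k + 2 ≤ l → l + 1 < n → Commute (t k) (t l)) :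
    descProd t j m * t k = t (k - 1) * descProd t j m := by
  obtain ⟨d, hd⟩ : ∃ d, k = j + 1 + d := ⟨k - j - 1, by omega⟩
  induction d generalizing j with
  | zero =>
    obtain rfl : k = j + 1 := hd
    have hbr := hbraid j (by omega)
    have hc : Commute (t j) (descProd t (j + 1 + 1) m) :=
      commute_descProd fun i hi him => hfar j i (by omega) (by omega)
    rw [descProd_eq_mul (by omega : j < m), descProd_eq_mul (by omega : j + 1 < m),
      Nat.add_sub_cancel]
    calc descProd t (j + 1 + 1) m * t (j + 1) * t j * t (j + 1)
        = descProd t (j + 1 + 1) m * (t j * t (j + 1) * t j) := by rw [hbr]; group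
      _ = t j * (descProd t (j + 1 + 1) m * t (j + 1) * t j) := by
        simp only [← mul_assoc, ← hc.eq]
  | succ d ih =>
    have hc : Commute (t j) (t k) := hfar j k (by omega) (by omega)
    rw [descProd_eq_mul (by omega : j < m), mul_assoc, hc.eq, ← mul_assoc, ih (by omega) (by omega),
      mul_assoc]

theorem one_mem_descProdCover (m : ℕ) : (1 : G) ∈ descProdCover t m := by
  induction m with
  | zero => rfl
  | succ m ih => exact ⟨(1, m), ⟨ih, Set.mem_Iic.2 le_rfl⟩, by simp [descProd_self]⟩

theorem mul_mem_descProdCover {n m k : ℕ} (hm : m ≤ n) (hk : k + 1 < m)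
    (hsq : ∀ k, k + 1 < n → t k ^ 2 = 1)
    (hbraid : ∀ k, k + 2 < n → t k * t (k + 1) * t k = t (k + 1) * t k * t (k + 1))
    (hfar : ∀ k l, k + 2 ≤ l → l + 1 < n → Commute (t k) (t l))
    {w : G} (hw : w ∈ descProdCover t m) : w * t k ∈ descProdCover t m := by
  induction m generalizing k w with
  | zero => omega
  | succ m ih =>
    obtain ⟨⟨u, j⟩, ⟨hu, hj⟩, rfl⟩ := hw
    simp only [Set.mem_Iic] at hj
    rcases (show k + 2 ≤ j ∨ k + 1 = j ∨ k = j ∨ j < k by omega) with hkj | rfl | rfl | hjk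
    · have hc : Commute (t k) (descProd t j m) :=
        commute_descProd fun i hi him => hfar k i (by omega) (by omega)
      refine ⟨(u * t k, j), ⟨ih (by omega) (by omega) hu, hj⟩, ?_⟩
      simp only [mul_assoc, hc.eq]
    · refine ⟨(u, k), ⟨hu, Set.mem_Iic.2 (by omega)⟩, ?_⟩
      simp only [descProd_eq_mul (t := t) (by omega : k < m), mul_assoc]
    · refine ⟨(u, k + 1), ⟨hu, Set.mem_Iic.2 (by omega)⟩, ?_⟩
      simp only [descProd_eq_mul (t := t) (by omega : k < m), mul_assoc, ← sq, hsq k (by omega),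
        mul_one]
    · refine ⟨(u * t (k - 1), j), ⟨ih (by omega) (by omega) hu, hj⟩, ?_⟩
      simp only [mul_assoc, descProd_mul_of_lt hjk (by omega) (by omega : m < n) hbraid hfar]

theorem descProdCover_finite_ncard_le (m : ℕ) :
    (descProdCover t m).Finite ∧ (descProdCover t m).ncard ≤ m.factorial := by
  induction m with
  | zero => simp [descProdCover]
  | succ m ih =>
    refine ⟨(ih.1.prod (Set.finite_Iic m)).image _, ?_⟩
    calc (descProdCover t (m + 1)).ncard ≤ (descProdCover t m ×ˢ Set.Iic m).ncard :=
          Set.ncard_image_le (ih.1.prod (Set.finite_Iic m))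
      _ ≤ m.factorial * (m + 1) := by rw [Set.ncard_prod, Set.ncard_Iic_nat]; gcongr; exact ih.2
      _ = (m + 1).factorial := by rw [Nat.factorial_succ, mul_comm]

theorem finite_and_card_le_factorial_of_typeA_relations {n : ℕ}
    (hgen : Subgroup.closure (t '' Set.Iio (n - 1)) = ⊤)
    (hsq : ∀ k, k + 1 < n → t k ^ 2 = 1)
    (hbraid : ∀ k, k + 2 < n → t k * t (k + 1) * t k = t (k + 1) * t k * t (k + 1))
    (hfar : ∀ k l, k + 2 ≤ l → l + 1 < n → Commute (t k) (t l)) :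
    Finite G ∧ Nat.card G ≤ n.factorial := by
  have hcover (g : G) : g ∈ descProdCover t n := by
    have hg : g ∈ Subgroup.closure (t '' Set.Iio (n - 1)) := hgen ▸ Subgroup.mem_top g
    induction hg using Subgroup.closure_induction_right with
    | one => exact one_mem_descProdCover n
    | mul_right x _ y hy ih =>
      obtain ⟨k, hk, rfl⟩ := hy
      exact mul_mem_descProdCover le_rfl (by rw [Set.mem_Iio] at hk; omega) hsq hbraid hfar ih
    | mul_inv_cancel x _ y hy ih =>
      obtain ⟨k, hk, rfl⟩ := hy
      have hk : k + 1 < n := by rw [Set.mem_Iio] at hk; omega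
      rw [inv_eq_of_mul_eq_one_right (by rw [← sq, hsq k hk])]
      exact mul_mem_descProdCover le_rfl hk hsq hbraid hfar ih
  have huniv : Set.univ = descProdCover t n := Set.eq_univ_of_forall hcover |>.symm
  obtain ⟨hfin, hcard⟩ := descProdCover_finite_ncard_le (t := t) n
  exact ⟨Set.finite_univ_iff.1 (huniv ▸ hfin), by rwa [← Set.ncard_univ, huniv]⟩

end CoxeterA

theorem Nat.lt_induction_left {motive : (r s : ℕ) → r < s → Prop}
    (adjacent : ∀ r, motive r (r + 1) r.lt_succ_self)
    (step : ∀ r s (h : r + 1 < s), motive (r + 1) s h → motive r s (by omega))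
    (r s : ℕ) (h : r < s) : motive r s h := by
  obtain ⟨d, hd⟩ : ∃ d, s = r + 1 + d := ⟨s - r - 1, by omega⟩
  induction d generalizing r with
  | zero => subst hd; exact adjacent r
  | succ d ih => exact step r s (by omega) (ih (r + 1) (by omega) (by omega))

namespace BraidGroup

variable {n : ℕ}

theorem bgen_of_lt {t : ℕ} (h : t < n - 1) : bgen n t = PresentedGroup.of ⟨t, h⟩ := dif_pos h

theorem bgen_of_ge {t : ℕ} (h : n - 1 ≤ t) : bgen n t = 1 := dif_neg (not_lt.2 h)

theorem bgen_braid {t : ℕ} (h : t + 2 < n) :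
    bgen n t * bgen n (t + 1) * bgen n t = bgen n (t + 1) * bgen n t * bgen n (t + 1) := by
  rw [bgen_of_lt (by omega), bgen_of_lt (by omega)]
  exact PresentedGroup.mk_eq_mk_of_mul_inv_mem ⟨_, _, Or.inl ⟨rfl, rfl⟩⟩

theorem bgen_commute {t s : ℕ} (h : t + 2 ≤ s) : Commute (bgen n t) (bgen n s) := by
  rcases lt_or_ge s (n - 1) with hs | hs
  · rw [bgen_of_lt (by omega), bgen_of_lt hs]
    exact PresentedGroup.mk_eq_mk_of_mul_inv_mem ⟨_, _, Or.inr ⟨show t + 1 < s by omega, rfl⟩⟩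
  · rw [bgen_of_ge hs]; exact Commute.one_right _

theorem closure_bgen : Subgroup.closure (bgen n '' Set.Iio (n - 1)) = ⊤ := by
  convert PresentedGroup.closure_range_of (braidRels n)
  ext g
  constructor
  · rintro ⟨t, ht, rfl⟩; exact ⟨⟨t, ht⟩, (bgen_of_lt ht).symm⟩
  · rintro ⟨i, rfl⟩; exact ⟨i, i.2, bgen_of_lt i.2⟩

theorem halfTwist_self_succ (r : ℕ) : halfTwist n r (r + 1) = bgen n r := by
  simp [halfTwist, bpref]

theorem bgen_conj_halfTwist {r s : ℕ} (h : r + 1 < s) :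
    bgen n r * halfTwist n (r + 1) s * (bgen n r)⁻¹ = halfTwist n r s := by
  have hcons : bpref n r (s - 1) = bgen n r * bpref n (r + 1) (s - 1) := by
    rw [bpref, bpref, show s - 1 - r = s - 1 - (r + 1) + 1 by omega, List.range'_succ]
    simp
  rw [halfTwist, halfTwist, hcons]
  group

theorem commute_bgen_halfTwist {k r s : ℕ} (hrs : r < s) (h : k + 1 < r ∨ s < k) :
    Commute (bgen n k) (halfTwist n r s) := by
  induction r, s, hrs using Nat.lt_induction_left with
  | adjacent r =>
    rw [halfTwist_self_succ]
    rcases h with h | h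
    · exact bgen_commute (by omega)
    · exact (bgen_commute (by omega)).symm
  | step r s hrs ih =>
    have hkr : Commute (bgen n k) (bgen n r) := by
      rcases h with h | h
      · exact bgen_commute (by omega)
      · exact (bgen_commute (by omega)).symm
    rw [← bgen_conj_halfTwist hrs]
    exact (hkr.mul_right (ih (by omega))).mul_right hkr.inv_right

theorem commute_bgen_halfTwist_of_lt_of_lt {k r s : ℕ} (hrk : r < k) (hks : k + 1 < s) :
    Commute (bgen n k) (halfTwist n r s) := by
  rcases lt_or_ge k (n - 1) with hk | hk
  swap
  · rw [bgen_of_ge hk]; exact Commute.one_left _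
  induction r, s, (show r < s by omega) using Nat.lt_induction_left with
  | adjacent r => omega
  | step r s hrs ih =>
    rw [← bgen_conj_halfTwist hrs]
    rcases (show r + 1 < k ∨ r + 1 = k by omega) with h | rfl
    · have hkr : Commute (bgen n k) (bgen n r) := (bgen_commute (by omega)).symm
      exact (hkr.mul_right (ih h hks)).mul_right hkr.inv_right
    · -- `g = b_r b_{r+1}` conjugates `b_r` to `b_{r+1}` and `b_{r+2,s}` to `b_{r,s}`
      set g := bgen n r * bgen n (r + 1)
      have hg : SemiconjBy g (bgen n r) (bgen n (r + 1)) :=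
        semiconjBy_mul_of_braid (bgen_braid (by omega))
      have e1 : g * bgen n r * g⁻¹ = bgen n (r + 1) := by rw [hg.eq]; group
      have e2 : g * halfTwist n (r + 1 + 1) s * g⁻¹ =
          bgen n r * halfTwist n (r + 1) s * (bgen n r)⁻¹ := by
        rw [← bgen_conj_halfTwist hks]; simp only [g]; group
      have hr : Commute (bgen n r) (halfTwist n (r + 1 + 1) s) :=
        commute_bgen_halfTwist hks (Or.inl (by omega))
      simpa only [e1, e2] using (Commute.conj_iff g).2 hr

theorem bgen_inv_conj_halfTwist {r s : ℕ} (hrs : r < s) (hs : s + 1 < n) :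
    (bgen n s)⁻¹ * halfTwist n r s * bgen n s = halfTwist n r (s + 1) := by
  induction r, s, hrs using Nat.lt_induction_left with
  | adjacent r =>
    rw [halfTwist_self_succ, ← bgen_conj_halfTwist (by omega), halfTwist_self_succ]
    exact (conj_eq_iff_braid.2 (bgen_braid (by omega))).symm
  | step r s hrs ih =>
    rw [← bgen_conj_halfTwist hrs, ← bgen_conj_halfTwist (s := s + 1) (by omega), ← ih hs]
    simpa using ((bgen_commute (n := n) (by omega : r + 2 ≤ s)).symm.inv_left.conj_conj_comm _)

theorem halfTwist_conj_halfTwist {r m u : ℕ} (hrm : r < m) (hmu : m < u) :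
    halfTwist n r m * halfTwist n m u * (halfTwist n r m)⁻¹ = halfTwist n r u := by
  induction r, m, hrm using Nat.lt_induction_left with
  | adjacent r => rw [halfTwist_self_succ, bgen_conj_halfTwist hmu]
  | step r m hrm ih =>
    rw [← bgen_conj_halfTwist hrm, ← bgen_conj_halfTwist (by omega : r + 1 < u), ← ih hmu]
    exact (commute_bgen_halfTwist hmu (Or.inl hrm)).conj_by_conj _

theorem halfTwist_inv_conj_halfTwist {r m u : ℕ} (hrm : r < m) (hmu : m < u) (hu : u < n) :
    (halfTwist n m u)⁻¹ * halfTwist n r m * halfTwist n m u = halfTwist n r u := by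
  induction r, m, hrm using Nat.lt_induction_left with
  | adjacent r =>
    rw [halfTwist_self_succ]
    induction u, hmu using Nat.le_induction with
    | base =>
      rw [halfTwist_self_succ, ← bgen_inv_conj_halfTwist (by omega) (by omega), halfTwist_self_succ]
    | succ u hru ih =>
      rw [← bgen_inv_conj_halfTwist hru (by omega), ← bgen_inv_conj_halfTwist (by omega) (by omega),
        ← ih (by omega)]
      simpa only [mul_inv_rev, inv_inv, mul_assoc] using
        (bgen_commute (n := n) (by omega : r + 2 ≤ u)).symm.inv_left.conj_by_conj
          (halfTwist n (r + 1) u)⁻¹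
  | step r m hrm ih =>
    rw [← bgen_conj_halfTwist hrm, ← bgen_conj_halfTwist (by omega : r + 1 < u), ← ih hmu]
    simpa using (commute_bgen_halfTwist (n := n) hmu (Or.inl hrm)).symm.inv_left.conj_conj_comm _

theorem halfTwist_braid {r m u : ℕ} (hrm : r < m) (hmu : m < u) (hu : u < n) :
    halfTwist n r m * halfTwist n m u * halfTwist n r m =
      halfTwist n m u * halfTwist n r m * halfTwist n m u := by
  rw [← conj_eq_iff_braid, halfTwist_conj_halfTwist hrm hmu,
    halfTwist_inv_conj_halfTwist hrm hmu hu]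

theorem commute_halfTwist_halfTwist {r s u w : ℕ} (hrs : r < s) (huw : u < w) (hsu : s < u) :
    Commute (halfTwist n r s) (halfTwist n u w) := by
  induction r, s, hrs using Nat.lt_induction_left with
  | adjacent r => rw [halfTwist_self_succ]; exact commute_bgen_halfTwist huw (Or.inl (by omega))
  | step r s hrs ih =>
    rw [← bgen_conj_halfTwist hrs]
    have hr := commute_bgen_halfTwist (n := n) huw (Or.inl (by omega : r + 1 < u))
    exact ((hr.mul_left (ih hsu)).mul_left hr.inv_left)

theorem finite_and_card_quotient_le_factorial (K : Subgroup (BraidGroup n)) [K.Normal]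
    (hK : ∀ k, k + 1 < n → bgen n k ^ 2 ∈ K) :
    Finite (BraidGroup n ⧸ K) ∧ Nat.card (BraidGroup n ⧸ K) ≤ n.factorial := by
  refine finite_and_card_le_factorial_of_typeA_relations
    (t := fun k => QuotientGroup.mk' K (bgen n k)) ?_ (fun k hk => ?_) (fun k hk => ?_)
    (fun k l hkl _ => (bgen_commute hkl).map _)
  · rw [← Set.image_image, ← MonoidHom.map_closure, closure_bgen, ← MonoidHom.range_eq_map,
      MonoidHom.range_eq_top.2 (QuotientGroup.mk'_surjective K)]
  · rw [← map_pow, QuotientGroup.mk'_apply, QuotientGroup.eq_one_iff]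
    exact hK k hk
  · simpa only [map_mul] using congrArg (QuotientGroup.mk' K) (bgen_braid hk)

variable {π : BraidGroup n →* Equiv.Perm (Fin n)}

theorem sq_halfTwist_mem_ker (hgen : IsBraidProj n π) (r s : ℕ) :
    halfTwist n r s ^ 2 ∈ π.ker := by
  have hb (t : ℕ) : π (bgen n t) ^ 2 = 1 := by
    rcases lt_or_ge t (n - 1) with h | h
    · rw [bgen_of_lt h, hgen, sq, Equiv.swap_mul_self]
    · rw [bgen_of_ge h, map_one, one_pow]
  rw [MonoidHom.mem_ker, map_pow, halfTwist, map_mul, map_mul, map_inv, conj_pow, hb, mul_one,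
    mul_inv_cancel]

theorem sq_bgen_mem_ker (hgen : IsBraidProj n π) (k : ℕ) : bgen n k ^ 2 ∈ π.ker := by
  simpa only [halfTwist_self_succ] using sq_halfTwist_mem_ker hgen k (k + 1)

end BraidGroup

section TwistSq

open BraidGroup

variable {n : ℕ} {H : Type*} [Group H] (f : BraidGroup n →* H)

noncomputable def twistSq (r s : ℕ) : H := f (halfTwist n r s) ^ 2

def twistSqSet : Set H := {x | ∃ r s, r < s ∧ s < n ∧ x = twistSq f r s}

variable {f}

theorem twistSq_self_succ (r : ℕ) : twistSq f r (r + 1) = f (bgen n r) ^ 2 := by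
  rw [twistSq, halfTwist_self_succ]

theorem twistSq_conj {g : BraidGroup n} {r s r' s' : ℕ}
    (h : g * halfTwist n r s * g⁻¹ = halfTwist n r' s') :
    f g * twistSq f r s * (f g)⁻¹ = twistSq f r' s' := by
  rw [twistSq, twistSq, ← h, map_mul, map_mul, map_inv, conj_pow]

theorem twistSq_conj_of_commute {g : BraidGroup n} {r s : ℕ} (h : Commute g (halfTwist n r s)) :
    f g * twistSq f r s * (f g)⁻¹ = twistSq f r s :=
  ((h.map f).pow_right 2).mul_inv_cancel

theorem twistSq_inv_conj {g : BraidGroup n} {r s r' s' : ℕ}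
    (h : g⁻¹ * halfTwist n r s * g = halfTwist n r' s') :
    (f g)⁻¹ * twistSq f r s * f g = twistSq f r' s' := by
  simpa using twistSq_conj (f := f) (g := g⁻¹) (by simpa using h)

theorem commute_twistSq_of_conj {g : BraidGroup n} {r s t u r' s' t' u' : ℕ}
    (h₁ : g * halfTwist n r s * g⁻¹ = halfTwist n r' s')
    (h₂ : g * halfTwist n t u * g⁻¹ = halfTwist n t' u')
    (h : Commute (twistSq f r s) (twistSq f t u)) :
    Commute (twistSq f r' s') (twistSq f t' u') := by
  rw [← twistSq_conj h₁, ← twistSq_conj h₂]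
  exact (Commute.conj_iff _).2 h

theorem twistSq_sq (hpow : ∀ i, f (bgen n i) ^ 4 = 1) (r s : ℕ) : twistSq f r s ^ 2 = 1 := by
  rw [twistSq, ← pow_mul, halfTwist, map_mul, map_mul, map_inv, conj_pow, hpow, mul_one,
    mul_inv_cancel]

section Relations

variable (hcomm : ∀ i, Commute (f (bgen n i) ^ 2) (f (bgen n (i + 1)) ^ 2))
include hcomm

theorem commute_twistSq_chain {r m u : ℕ} (hrm : r < m) (hmu : m < u) (hu : u < n) :
    Commute (twistSq f r m) (twistSq f m u) := by
  induction r, m, hrm using Nat.lt_induction_left with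
  | adjacent r =>
    induction u, hmu using Nat.le_induction with
    | base => rw [twistSq_self_succ, twistSq_self_succ]; exact hcomm r
    | succ u hru ih =>
      have hb := bgen_inv_conj_halfTwist (n := n) (by omega : r + 1 < u) (by omega)
      refine commute_twistSq_of_conj (g := (bgen n u)⁻¹) ?_ (by simpa using hb) (ih (by omega))
      rw [halfTwist_self_succ]
      exact (bgen_commute (by omega : r + 2 ≤ u)).symm.inv_left.mul_inv_cancel
  | step r m hrm ih =>
    exact commute_twistSq_of_conj (bgen_conj_halfTwist hrm)
      (commute_bgen_halfTwist hmu (Or.inl hrm)).mul_inv_cancel (ih hmu)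

theorem commute_twistSq_left {r m u : ℕ} (hrm : r < m) (hmu : m < u) (hu : u < n) :
    Commute (twistSq f r m) (twistSq f r u) :=
  commute_twistSq_of_conj (g := halfTwist n r m) (mul_inv_cancel_right _ _)
    (halfTwist_conj_halfTwist hrm hmu) (commute_twistSq_chain hcomm hrm hmu hu)

theorem commute_twistSq_right {r m u : ℕ} (hrm : r < m) (hmu : m < u) (hu : u < n) :
    Commute (twistSq f r u) (twistSq f m u) :=
  commute_twistSq_of_conj (g := (halfTwist n m u)⁻¹)
    (by simpa using halfTwist_inv_conj_halfTwist hrm hmu hu) (by group)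
    (commute_twistSq_chain hcomm hrm hmu hu)

omit hcomm in
theorem commute_twistSq_garside {r m u w : ℕ} (hrm : r < m) (hmu : m < u) (huw : u < w)
    (hw : w < n) :
    Commute (twistSq f r u) (twistSq f r m * twistSq f m u * twistSq f r u *
        twistSq f u w * twistSq f m w * twistSq f r w) ∧
      Commute (twistSq f m u) (twistSq f r m * twistSq f m u * twistSq f r u *
        twistSq f u w * twistSq f m w * twistSq f r w) := by
  set x := halfTwist n r m
  set y := halfTwist n m u
  set z := halfTwist n u w
  have hxy : x * y * x = y * x * y := halfTwist_braid hrm hmu (by omega)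
  have hyz : y * z * y = z * y * z := halfTwist_braid hmu huw hw
  have hxz : Commute x z := commute_halfTwist_halfTwist hrm huw hmu
  have hP : y⁻¹ * x * y = halfTwist n r u := halfTwist_inv_conj_halfTwist hrm hmu (by omega)
  have hD : f ((x * y * z * x * y * x) ^ 2) = twistSq f r m * twistSq f m u * twistSq f r u *
      twistSq f u w * twistSq f m w * twistSq f r w := by
    rw [garside_sq hxy hyz hxz, hP, halfTwist_inv_conj_halfTwist hmu huw hw,
      halfTwist_inv_conj_halfTwist (by omega) huw hw]
    simp only [map_mul, map_pow, twistSq]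
    rfl
  have hΔx := commute_garside_sq_left hxy hyz hxz
  have hΔy := (commute_garside_middle hxy hxz).pow_left 2
  rw [← hD]
  constructor
  · rw [twistSq, ← hP]
    exact ((((hΔy.inv_right.mul_right hΔx).mul_right hΔy).map f).pow_right 2).symm
  · exact ((hΔy.map f).pow_right 2).symm

theorem commute_twistSq_linked {r m u w : ℕ} (hrm : r < m) (hmu : m < u) (huw : u < w)
    (hw : w < n) : Commute (twistSq f r u) (twistSq f m w) := by
  have hXYPZ : Commute (twistSq f r u)
      (twistSq f r m * twistSq f m u * twistSq f r u * twistSq f u w) :=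
    ((((commute_twistSq_left hcomm hrm hmu (by omega)).symm.mul_right
      (commute_twistSq_right hcomm hrm hmu (by omega))).mul_right (Commute.refl _)).mul_right
      (commute_twistSq_chain hcomm (by omega) huw hw))
  exact (((commute_twistSq_garside hrm hmu huw hw).1.of_mul_left
    (commute_twistSq_left hcomm (by omega) huw hw)).of_mul_right hXYPZ)

theorem commute_twistSq_nested {r m u w : ℕ} (hrm : r < m) (hmu : m < u) (huw : u < w)
    (hw : w < n) : Commute (twistSq f m u) (twistSq f r w) := by
  have hXYPZQ : Commute (twistSq f m u)
      (twistSq f r m * twistSq f m u * twistSq f r u * twistSq f u w * twistSq f m w) :=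
    (((((commute_twistSq_chain hcomm hrm hmu (by omega)).symm.mul_right (Commute.refl _)).mul_right
      (commute_twistSq_right hcomm hrm hmu (by omega)).symm).mul_right
      (commute_twistSq_chain hcomm hmu huw hw)).mul_right
      (commute_twistSq_left hcomm hmu huw hw))
  exact (commute_twistSq_garside hrm hmu huw hw).2.of_mul_right hXYPZQ

theorem commute_twistSq {r s t u : ℕ} (hrs : r < s) (hs : s < n) (htu : t < u) (hu : u < n) :
    Commute (twistSq f r s) (twistSq f t u) := by
  wlog hrt : r < t ∨ r = t ∧ s ≤ u generalizing r s t u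
  · exact (this htu hu hrs hs (by omega)).symm
  rcases hrt with hrt | ⟨rfl, hsu⟩
  · rcases lt_trichotomy s t with hst | rfl | hts
    · exact (((commute_halfTwist_halfTwist hrs htu hst).map f).pow_left 2).pow_right 2
    · exact commute_twistSq_chain hcomm hrs htu hu
    · rcases lt_trichotomy s u with hsu | rfl | hus
      · exact commute_twistSq_linked hcomm hrt hts hsu hu
      · exact commute_twistSq_right hcomm hrt hts hs
      · exact (commute_twistSq_nested hcomm hrt htu hus hs).symm
  · rcases hsu.lt_or_eq with hsu | rfl
    · exact commute_twistSq_left hcomm hrs hsu hu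
    · exact Commute.refl _

-- `b_k²` is itself one of the commuting `A`'s, so conjugation by `b_k` and by `b_k⁻¹` agree
theorem inv_conj_twistSq_eq_conj {k r s : ℕ} (hk : k + 1 < n) (hrs : r < s) (hs : s < n) :
    (f (bgen n k))⁻¹ * twistSq f r s * f (bgen n k) =
      f (bgen n k) * twistSq f r s * (f (bgen n k))⁻¹ := by
  refine inv_mul_mul_eq_mul_mul_inv_of_commute_sq ?_
  rw [← twistSq_self_succ]
  exact commute_twistSq hcomm k.lt_succ_self hk hrs hs

theorem exists_bgen_conj_twistSq {k r s : ℕ} (hk : k + 1 < n) (hrs : r < s) (hs : s < n) :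
    ∃ r' s', r' < s' ∧ s' < n ∧
      f (bgen n k) * twistSq f r s * (f (bgen n k))⁻¹ = twistSq f r' s' := by
  have hinv {r' s'} (h : (bgen n k)⁻¹ * halfTwist n r s * bgen n k = halfTwist n r' s') :
      f (bgen n k) * twistSq f r s * (f (bgen n k))⁻¹ = twistSq f r' s' := by
    rw [← inv_conj_twistSq_eq_conj hcomm hk hrs hs, twistSq_inv_conj h]
  -- conjugation by `b_k` moves the endpoints `r, s` by the transposition `(k k+1)`
  rcases (show r = k + 1 ∨ (r < k ∧ s = k + 1) ∨ (k = r ∧ s = k + 1) ∨ (k = r ∧ k + 1 < s) ∨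
      (r < k ∧ k = s) ∨ (k + 1 < r ∨ s < k) ∨ (r < k ∧ k + 1 < s) by omega) with
    rfl | ⟨hrk, rfl⟩ | ⟨rfl, rfl⟩ | ⟨rfl, hks⟩ | ⟨hrk, rfl⟩ | hfar | ⟨hrk, hks⟩
  · exact ⟨k, s, by omega, hs, twistSq_conj (bgen_conj_halfTwist hrs)⟩
  · refine ⟨r, k, hrk, by omega, twistSq_conj ?_⟩
    rw [← bgen_inv_conj_halfTwist hrk (by omega)]; group
  · refine ⟨k, k + 1, hrs, hs, twistSq_conj_of_commute ?_⟩
    rw [halfTwist_self_succ]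
  · refine ⟨k + 1, s, hks, hs, hinv ?_⟩
    rw [← bgen_conj_halfTwist hks]; group
  · exact ⟨r, k + 1, by omega, by omega, hinv (bgen_inv_conj_halfTwist hrk (by omega))⟩
  · exact ⟨r, s, hrs, hs, twistSq_conj_of_commute (commute_bgen_halfTwist hrs hfar)⟩
  · exact ⟨r, s, hrs, hs, twistSq_conj_of_commute (commute_bgen_halfTwist_of_lt_of_lt hrk hks)⟩

theorem normal_closure_twistSqSet (hf : Function.Surjective f) :
    (Subgroup.closure (twistSqSet f)).Normal := by
  refine Subgroup.normal_closure_of_conj_mem (T := f '' (bgen n '' Set.Iio (n - 1))) ?_ ?_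
  · rw [← MonoidHom.map_closure, closure_bgen, ← MonoidHom.range_eq_map,
      MonoidHom.range_eq_top.2 hf]
  · rintro _ ⟨_, ⟨k, hk, rfl⟩, rfl⟩ _ ⟨r, s, hrs, hs, rfl⟩
    have hk : k + 1 < n := by rw [Set.mem_Iio] at hk; omega
    obtain ⟨r', s', hrs', hs', h⟩ := exists_bgen_conj_twistSq hcomm hk hrs hs
    have hmem : f (bgen n k) * twistSq f r s * (f (bgen n k))⁻¹ ∈
        Subgroup.closure (twistSqSet f) := h ▸ Subgroup.subset_closure ⟨r', s', hrs', hs', rfl⟩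
    exact ⟨hmem, inv_conj_twistSq_eq_conj hcomm hk hrs hs ▸ hmem⟩

theorem sq_eq_one_of_mem_closure_twistSqSet (hpow : ∀ i, f (bgen n i) ^ 4 = 1) {x : H}
    (hx : x ∈ Subgroup.closure (twistSqSet f)) : x ^ 2 = 1 := by
  refine Subgroup.sq_eq_one_of_mem_closure ?_ ?_ hx
  · rintro _ ⟨r, s, hrs, hs, rfl⟩ _ ⟨t, u, htu, hu, rfl⟩
    exact commute_twistSq hcomm hrs hs htu hu
  · rintro _ ⟨r, s, -, -, rfl⟩
    exact twistSq_sq hpow r s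

end Relations

end TwistSq

open BraidGroup

def level4Relators (n : ℕ) : Set (BraidGroup n) :=
  {x : BraidGroup n | ∃ i : ℕ, i < n - 1 ∧
      x = ⁅(bgen n i) ^ 2, (bgen n (i + 1)) ^ 2⁆} ∪
    {x : BraidGroup n | ∃ i : ℕ, i + 4 < n ∧
      x = ⁅(bb n i (i + 2)) ^ 2, (bb n (i + 1) (i + 3)) ^ 2⁆} ∪
    {x : BraidGroup n | ∃ i : ℕ, i < n - 1 ∧ x = (bgen n i) ^ 4}

section Level4

variable {n : ℕ} {π : BraidGroup n →* Equiv.Perm (Fin n)}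

theorem normalClosure_level4Relators_le_closure_sq (hgen : IsBraidProj n π) :
    Subgroup.normalClosure (level4Relators n) ≤
      Subgroup.closure {x : BraidGroup n | ∃ y ∈ π.ker, x = y ^ 2} := by
  have := normal_closure_sq π.ker
  refine Subgroup.normalClosure_le_normal ?_
  rintro _ ((⟨i, -, rfl⟩ | ⟨i, -, rfl⟩) | ⟨i, -, rfl⟩)
  · exact commutatorElement_mem_closure_sq (sq_bgen_mem_ker hgen i) (sq_bgen_mem_ker hgen (i + 1))
  · exact commutatorElement_mem_closure_sq (sq_halfTwist_mem_ker hgen _ _)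
      (sq_halfTwist_mem_ker hgen _ _)
  · rw [show bgen n i ^ 4 = (bgen n i ^ 2) ^ 2 by rw [← pow_mul]]
    exact Subgroup.subset_closure ⟨_, sq_bgen_mem_ker hgen i, rfl⟩

local notation "N" => Subgroup.normalClosure (level4Relators n)

theorem commute_mk_bgen_sq (i : ℕ) :
    Commute (QuotientGroup.mk' N (bgen n i) ^ 2) (QuotientGroup.mk' N (bgen n (i + 1)) ^ 2) := by
  rcases lt_or_ge i (n - 1) with h | h
  · have hmem : ⁅bgen n i ^ 2, bgen n (i + 1) ^ 2⁆ ∈ N :=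
      Subgroup.subset_normalClosure (Or.inl (Or.inl ⟨i, h, rfl⟩))
    rw [← QuotientGroup.eq_one_iff, ← QuotientGroup.mk'_apply, map_commutatorElement, map_pow,
      map_pow] at hmem
    exact commutatorElement_eq_one_iff_commute.1 hmem
  · rw [bgen_of_ge h, map_one, one_pow]
    exact Commute.one_left _

theorem mk_bgen_pow_four (i : ℕ) : QuotientGroup.mk' N (bgen n i) ^ 4 = 1 := by
  rcases lt_or_ge i (n - 1) with h | h
  · rw [← map_pow, QuotientGroup.mk'_apply, QuotientGroup.eq_one_iff]
    exact Subgroup.subset_normalClosure (Or.inr ⟨i, h, rfl⟩)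
  · rw [bgen_of_ge h, map_one, one_pow]

theorem closure_sq_le_normalClosure_level4Relators (hgen : IsBraidProj n π)
    (hsurj : Function.Surjective π) :
    Subgroup.closure {x : BraidGroup n | ∃ y ∈ π.ker, x = y ^ 2} ≤ N := by
  set f := QuotientGroup.mk' N
  set M := Subgroup.closure (twistSqSet f)
  have := normal_closure_twistSqSet commute_mk_bgen_sq (QuotientGroup.mk'_surjective N)
  have hN : N ≤ π.ker := (normalClosure_level4Relators_le_closure_sq hgen).trans
    (Subgroup.closure_le _ |>.2 fun _ ⟨y, hy, hx⟩ => hx ▸ pow_mem hy 2)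
  have hK : M.comap f ≤ π.ker :=
    calc M.comap f ≤ (π.ker.map f).comap f := by
          refine Subgroup.comap_mono (Subgroup.closure_le _ |>.2 ?_)
          rintro _ ⟨r, s, -, -, rfl⟩
          exact ⟨_, sq_halfTwist_mem_ker hgen r s, map_pow f _ 2⟩
      _ = π.ker := by rw [Subgroup.comap_map_eq, QuotientGroup.ker_mk', sup_eq_left.2 hN]
  obtain ⟨_, hcard⟩ := finite_and_card_quotient_le_factorial (M.comap f)
    fun k hk => Subgroup.subset_closure
      ⟨k, k + 1, k.lt_succ_self, hk, by rw [twistSq_self_succ, map_pow]⟩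
  have hker := π.ker_le_of_card_quotient_le hsurj hK (by rwa [Nat.card_perm, Nat.card_fin])
  rw [Subgroup.closure_le]
  rintro _ ⟨y, hy, rfl⟩
  rw [SetLike.mem_coe, ← QuotientGroup.eq_one_iff, ← QuotientGroup.mk'_apply, map_pow]
  exact sq_eq_one_of_mem_closure_twistSqSet commute_mk_bgen_sq mk_bgen_pow_four (hker hy)

end Level4

/-- For all `n`, the level 4 congruence subgroup `B_n[4] = PB_n²` (the
subgroup of the pure braid group generated by all squares) is normally generated in `B_n`
by the elements `[b_i², b_{i+1}²]`, `[b_{i,i+2}², b_{i+1,i+3}²]`, and `b_i⁴`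
(`0`-based index ranges corresponding to `1 ≤ i ≤ n-1`, `1 ≤ i ≤ n-4`, `1 ≤ i ≤ n-1`):
the normal closure of this set equals `PB_n²`.  Equivalently, the quotient of `B_n` by this
normal closure is `𝒵_n = B_n/PB_n²`. -/
theorem statement18 (n : ℕ) (π : BraidGroup n →* Equiv.Perm (Fin n))
    (hgen : IsBraidProj n π) (hsurj : Function.Surjective π) :
    Subgroup.normalClosure
        ({x : BraidGroup n | ∃ i : ℕ, i < n - 1 ∧
            x = ⁅(bgen n i) ^ 2, (bgen n (i + 1)) ^ 2⁆} ∪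
          {x : BraidGroup n | ∃ i : ℕ, i + 4 < n ∧
            x = ⁅(bb n i (i + 2)) ^ 2, (bb n (i + 1) (i + 3)) ^ 2⁆} ∪
          {x : BraidGroup n | ∃ i : ℕ, i < n - 1 ∧ x = (bgen n i) ^ 4}) =
      Subgroup.closure {x : BraidGroup n | ∃ y ∈ π.ker, x = y ^ 2} :=
  le_antisymm (normalClosure_level4Relators_le_closure_sq hgen)
    (closure_sq_le_normalClosure_level4Relators hgen hsurj)
end
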